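/- arXiv:2105.12175 — 4 statements merged into one kernel-verified Lean document; each statement's English description precedes it below -/
import Mathlib

section
/- Let ε, δ, q > 0 with q ≥ 1, and let φ : ℝ^d → ℂ satisfy |φ(x)−φ(y)| ≤ |x−y|^δ (1+|x|)^{-(d+ε+δ)} + |x−y|^δ (1+|y|)^{-(d+ε+δ)} for all x, y. Define φ_t(x) = t^{-d} φ(x/t). Then there is a constant C depending only on d, ε, δ, q such that for all x, y ∈ ℝ^d with |x| > 2|y|, (∫_0^∞ |φ_t(x+y) − φ_t(x)|^q dt/t)^{1/q} ≤ C |y|^δ / |x|^{d+δ}. -/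
open MeasureTheory Set

set_option maxHeartbeats 2000000 in
/-- Hörmander-type regularity of the vector-valued kernel. -/
theorem stmt1 (d : ℕ) (hd : 0 < d) (ε δ q : ℝ) (hε : 0 < ε) (hδ : 0 < δ) (hq : 1 ≤ q) :
    ∃ C : ℝ, 0 < C ∧ ∀ φ : EuclideanSpace ℝ (Fin d) → ℂ,
      (∀ x y, ‖φ x - φ y‖ ≤
          ‖x - y‖ ^ δ * (1 + ‖x‖) ^ (-((d : ℝ) + ε + δ)) +
            ‖x - y‖ ^ δ * (1 + ‖y‖) ^ (-((d : ℝ) + ε + δ))) →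
      ∀ x y : EuclideanSpace ℝ (Fin d), 2 * ‖y‖ < ‖x‖ →
        (∫ t in Ioi (0 : ℝ),
            ‖((t ^ d)⁻¹ : ℝ) • φ (t⁻¹ • (x + y)) - ((t ^ d)⁻¹ : ℝ) • φ (t⁻¹ • x)‖ ^ q / t)
              ^ (1 / q)
          ≤ C * ‖y‖ ^ δ / ‖x‖ ^ ((d : ℝ) + δ) := by
  have hq0 : (0:ℝ) < q := lt_of_lt_of_le one_pos hq
  set a : ℝ := (d : ℝ) + ε + δ with ha_def
  have ha : 0 < a := by positivity
  set K : ℝ := ((2:ℝ) ^ (1+a)) ^ q / (ε * q) + (2:ℝ) ^ q / (((d:ℝ) + δ) * q) with hK_def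
  have hK : 0 < K := by positivity
  refine ⟨K ^ (1/q), Real.rpow_pos_of_pos hK _, ?_⟩
  intro φ hφ x y hxy
  have hr : (0:ℝ) ≤ ‖y‖ := norm_nonneg _
  have hs : (0:ℝ) < ‖x‖ := lt_of_le_of_lt (by positivity) hxy
  set r : ℝ := ‖y‖ with hr_def
  set s : ℝ := ‖x‖ with hs_def
  set D1 : ℝ := (2:ℝ) ^ (1+a) * r ^ δ * s ^ (-a) with hD1
  have hD1_nonneg : 0 ≤ D1 := by rw [hD1]; positivity
  set D2 : ℝ := 2 * r ^ δ with hD2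
  have hD2_nonneg : 0 ≤ D2 := by rw [hD2]; positivity
  set K1 : ℝ := D1 ^ q with hK1
  set K2 : ℝ := D2 ^ q with hK2
  set F : ℝ → ℝ := fun t =>
    ‖((t ^ d)⁻¹ : ℝ) • φ (t⁻¹ • (x + y)) - ((t ^ d)⁻¹ : ℝ) • φ (t⁻¹ • x)‖ ^ q / t with hF
  set g : ℝ → ℝ := fun t => (Ioc 0 s).indicator (fun t => K1 * t ^ (ε*q-1)) t
      + (Ioi s).indicator (fun t => K2 * t ^ (-(((d:ℝ)+δ)*q)-1)) t with hg
  -- pointwise bound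
  have key : ∀ t ∈ Ioi (0:ℝ), F t ≤ g t := by
    intro t ht
    rw [mem_Ioi] at ht
    set m : ℝ := max 1 (s/(2*t)) with hm
    have hm_pos : (0:ℝ) < m := lt_of_lt_of_le one_pos (le_max_left _ _)
    have htd : ((t ^ d)⁻¹ : ℝ) = t ^ (-(d:ℝ)) := by
      rw [Real.rpow_neg ht.le, Real.rpow_natCast]
    have hnorm : ‖((t ^ d)⁻¹ : ℝ) • φ (t⁻¹ • (x + y)) - ((t ^ d)⁻¹ : ℝ) • φ (t⁻¹ • x)‖
        = t ^ (-(d:ℝ)) * ‖φ (t⁻¹ • (x + y)) - φ (t⁻¹ • x)‖ := by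
      rw [← smul_sub, norm_smul, htd, Real.norm_eq_abs,
        abs_of_pos (Real.rpow_pos_of_pos ht _)]
    have hu_sub : ‖t⁻¹ • (x + y) - t⁻¹ • x‖ = t⁻¹ * r := by
      rw [← smul_sub, add_sub_cancel_left, norm_smul, Real.norm_eq_abs, abs_inv,
        abs_of_pos ht]
    have hxplusy : s / 2 < ‖x + y‖ := by
      have h1 : s ≤ ‖x + y‖ + r := by
        have := norm_sub_le (x + y) y
        rw [add_sub_cancel_right] at this
        exact this
      linarith
    have hmu : m ≤ 1 + ‖t⁻¹ • (x + y)‖ := by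
      rw [norm_smul, Real.norm_eq_abs, abs_inv, abs_of_pos ht]
      have hn0 : (0:ℝ) ≤ t⁻¹ * ‖x + y‖ := by positivity
      refine max_le (by linarith) ?_
      have h2 : s / (2*t) ≤ t⁻¹ * ‖x + y‖ := by
        rw [div_le_iff₀ (by positivity)]
        have he : t⁻¹ * ‖x + y‖ * (2 * t) = 2 * ‖x + y‖ := by field_simp
        rw [he]; linarith
      linarith
    have hmv : m ≤ 1 + ‖t⁻¹ • x‖ := by
      rw [norm_smul, Real.norm_eq_abs, abs_inv, abs_of_pos ht]
      have hn0 : (0:ℝ) ≤ t⁻¹ * ‖x‖ := by positivity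
      refine max_le (by linarith) ?_
      have h2 : s / (2*t) ≤ t⁻¹ * s := by
        rw [div_le_iff₀ (by positivity)]
        have he : t⁻¹ * s * (2 * t) = 2 * s := by field_simp
        rw [he]; linarith
      rw [← hs_def]; linarith
    have hφbound : ‖φ (t⁻¹ • (x + y)) - φ (t⁻¹ • x)‖
        ≤ 2 * ((t⁻¹ * r) ^ δ * m ^ (-a)) := by
      have h1 := hφ (t⁻¹ • (x + y)) (t⁻¹ • x)
      rw [hu_sub] at h1
      have h2 : (1 + ‖t⁻¹ • (x + y)‖) ^ (-a) ≤ m ^ (-a) :=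
        Real.rpow_le_rpow_of_nonpos hm_pos hmu (neg_nonpos.mpr ha.le)
      have h3 : (1 + ‖t⁻¹ • x‖) ^ (-a) ≤ m ^ (-a) :=
        Real.rpow_le_rpow_of_nonpos hm_pos hmv (neg_nonpos.mpr ha.le)
      have h4 : (0:ℝ) ≤ (t⁻¹ * r) ^ δ := by positivity
      nlinarith [mul_le_mul_of_nonneg_left h2 h4, mul_le_mul_of_nonneg_left h3 h4]
    have hFB : F t ≤ (t ^ (-(d:ℝ)) * (2 * ((t⁻¹ * r) ^ δ * m ^ (-a)))) ^ q / t := by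
      simp only [hF]
      rw [hnorm]
      gcongr
    have hinvrpow : (t⁻¹ * r) ^ δ = t ^ (-δ) * r ^ δ := by
      rw [Real.mul_rpow (by positivity) hr, Real.inv_rpow ht.le, ← Real.rpow_neg ht.le]
    rcases le_or_gt t s with hts | hts
    · -- small t
      have hgt : g t = K1 * t ^ (ε*q-1) := by
        simp only [hg]
        rw [indicator_of_mem (show t ∈ Ioc 0 s from ⟨ht, hts⟩),
          indicator_of_notMem (show t ∉ Ioi s from not_lt.mpr hts), add_zero]
      have hmb : m ^ (-a) ≤ (2:ℝ) ^ a * t ^ a * s ^ (-a) := by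
        have h5 : (s/(2*t)) ^ (-a) = (2:ℝ) ^ a * t ^ a * s ^ (-a) := by
          rw [Real.div_rpow hs.le (by positivity), Real.rpow_neg hs.le,
            Real.rpow_neg (by positivity : (0:ℝ) ≤ 2*t),
            Real.mul_rpow (by norm_num) ht.le]
          rw [div_eq_mul_inv, inv_inv]
          ring
        calc m ^ (-a) ≤ (s/(2*t)) ^ (-a) :=
              Real.rpow_le_rpow_of_nonpos (by positivity) (le_max_right _ _)
                (neg_nonpos.mpr ha.le)
          _ ≤ _ := h5.le
      have hBD : t ^ (-(d:ℝ)) * (2 * ((t⁻¹ * r) ^ δ * m ^ (-a))) ≤ D1 * t ^ ε := by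
        have h6 : t ^ (-(d:ℝ)) * (2 * ((t⁻¹ * r) ^ δ * m ^ (-a)))
            ≤ t ^ (-(d:ℝ)) * (2 * ((t ^ (-δ) * r ^ δ) * ((2:ℝ) ^ a * t ^ a * s ^ (-a)))) := by
          rw [hinvrpow]
          gcongr <;> positivity
        refine h6.trans_eq ?_
        have e2 : t ^ (-(d:ℝ)) * (t ^ (-δ) * t ^ a) = t ^ ε := by
          rw [← Real.rpow_add ht, ← Real.rpow_add ht]
          congr 1
          rw [ha_def]; ring
        have e1 : (2:ℝ) ^ (1+a) = 2 * (2:ℝ) ^ a := by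
          rw [Real.rpow_add two_pos, Real.rpow_one]
        calc t ^ (-(d:ℝ)) * (2 * ((t ^ (-δ) * r ^ δ) * ((2:ℝ) ^ a * t ^ a * s ^ (-a))))
            = (2 * (2:ℝ) ^ a * r ^ δ * s ^ (-a)) * (t ^ (-(d:ℝ)) * (t ^ (-δ) * t ^ a)) := by
              ring
          _ = D1 * t ^ ε := by rw [e2, hD1, e1]
      have hfinal : (t ^ (-(d:ℝ)) * (2 * ((t⁻¹ * r) ^ δ * m ^ (-a)))) ^ q / t
          ≤ K1 * t ^ (ε*q-1) := by
        have h7 : (t ^ (-(d:ℝ)) * (2 * ((t⁻¹ * r) ^ δ * m ^ (-a)))) ^ q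
            ≤ (D1 * t ^ ε) ^ q :=
          Real.rpow_le_rpow (by positivity) hBD hq0.le
        have h8 : (D1 * t ^ ε) ^ q = K1 * t ^ (ε*q) := by
          rw [Real.mul_rpow hD1_nonneg (by positivity), ← Real.rpow_mul ht.le, hK1]
        calc (t ^ (-(d:ℝ)) * (2 * ((t⁻¹ * r) ^ δ * m ^ (-a)))) ^ q / t
            ≤ (D1 * t ^ ε) ^ q / t := by gcongr
          _ = K1 * t ^ (ε*q) / t := by rw [h8]
          _ = K1 * t ^ (ε*q-1) := by
              rw [Real.rpow_sub ht, Real.rpow_one, mul_div_assoc]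
      rw [hgt]
      exact hFB.trans hfinal
    · -- large t
      have hgt : g t = K2 * t ^ (-(((d:ℝ)+δ)*q)-1) := by
        simp only [hg]
        rw [indicator_of_notMem (show t ∉ Ioc 0 s from fun h => absurd h.2 (not_le.mpr hts)),
          indicator_of_mem (show t ∈ Ioi s from hts), zero_add]
      have hmb : m ^ (-a) ≤ 1 :=
        Real.rpow_le_one_of_one_le_of_nonpos (le_max_left _ _) (neg_nonpos.mpr ha.le)
      have hBD : t ^ (-(d:ℝ)) * (2 * ((t⁻¹ * r) ^ δ * m ^ (-a)))
          ≤ D2 * t ^ (-((d:ℝ)+δ)) := by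
        have h6 : t ^ (-(d:ℝ)) * (2 * ((t⁻¹ * r) ^ δ * m ^ (-a)))
            ≤ t ^ (-(d:ℝ)) * (2 * ((t ^ (-δ) * r ^ δ) * 1)) := by
          rw [hinvrpow]
          gcongr <;> positivity
        refine h6.trans_eq ?_
        have e2 : t ^ (-(d:ℝ)) * t ^ (-δ) = t ^ (-((d:ℝ)+δ)) := by
          rw [← Real.rpow_add ht]; congr 1; ring
        calc t ^ (-(d:ℝ)) * (2 * ((t ^ (-δ) * r ^ δ) * 1))
            = (2 * r ^ δ) * (t ^ (-(d:ℝ)) * t ^ (-δ)) := by ring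
          _ = D2 * t ^ (-((d:ℝ)+δ)) := by rw [e2, hD2]
      have hfinal : (t ^ (-(d:ℝ)) * (2 * ((t⁻¹ * r) ^ δ * m ^ (-a)))) ^ q / t
          ≤ K2 * t ^ (-(((d:ℝ)+δ)*q)-1) := by
        have h7 : (t ^ (-(d:ℝ)) * (2 * ((t⁻¹ * r) ^ δ * m ^ (-a)))) ^ q
            ≤ (D2 * t ^ (-((d:ℝ)+δ))) ^ q :=
          Real.rpow_le_rpow (by positivity) hBD hq0.le
        have h8 : (D2 * t ^ (-((d:ℝ)+δ))) ^ q = K2 * t ^ (-(((d:ℝ)+δ)*q)) := by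
          rw [Real.mul_rpow hD2_nonneg (by positivity), ← Real.rpow_mul ht.le, hK2, neg_mul]
        calc (t ^ (-(d:ℝ)) * (2 * ((t⁻¹ * r) ^ δ * m ^ (-a)))) ^ q / t
            ≤ (D2 * t ^ (-((d:ℝ)+δ))) ^ q / t := by gcongr
          _ = K2 * t ^ (-(((d:ℝ)+δ)*q)) / t := by rw [h8]
          _ = K2 * t ^ (-(((d:ℝ)+δ)*q)-1) := by
              rw [Real.rpow_sub ht, Real.rpow_one, mul_div_assoc]
      rw [hgt]
      exact hFB.trans hfinal
  -- integrability of g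
  have hεq : (-1:ℝ) < ε*q-1 := by nlinarith
  have hdq : -(((d:ℝ)+δ)*q)-1 < -1 := by
    have : (0:ℝ) < ((d:ℝ)+δ)*q := by positivity
    linarith
  have hint1 : IntegrableOn (fun t : ℝ => K1 * t ^ (ε*q-1)) (Ioc 0 s) := by
    have h := intervalIntegral.intervalIntegrable_rpow' hεq (a := 0) (b := s)
    rw [intervalIntegrable_iff_integrableOn_Ioc_of_le hs.le] at h
    exact h.const_mul K1
  have hint2 : IntegrableOn (fun t : ℝ => K2 * t ^ (-(((d:ℝ)+δ)*q)-1)) (Ioi s) :=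
    (integrableOn_Ioi_rpow_of_lt hdq hs).const_mul K2
  have hgint : Integrable g (volume.restrict (Ioi (0:ℝ))) := by
    rw [hg]
    exact ((hint1.integrable_indicator measurableSet_Ioc).integrableOn).add
      ((hint2.integrable_indicator measurableSet_Ioi).integrableOn)
  have hFnonneg : 0 ≤ᵐ[volume.restrict (Ioi (0:ℝ))] F := by
    filter_upwards [ae_restrict_mem measurableSet_Ioi] with t ht
    simp only [hF]
    exact div_nonneg (Real.rpow_nonneg (norm_nonneg _) q) (le_of_lt ht)
  have hFg : F ≤ᵐ[volume.restrict (Ioi (0:ℝ))] g := by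
    filter_upwards [ae_restrict_mem measurableSet_Ioi] with t ht using key t ht
  have hmono : ∫ t in Ioi (0:ℝ), F t ≤ ∫ t in Ioi (0:ℝ), g t :=
    integral_mono_of_nonneg hFnonneg hgint hFg
  -- value of the integral of g
  have hIg : ∫ t in Ioi (0:ℝ), g t
      = K1 * (s ^ (ε*q) / (ε*q)) + K2 * (s ^ (-(((d:ℝ)+δ)*q)) / (((d:ℝ)+δ)*q)) := by
    simp only [hg]
    rw [integral_add ((hint1.integrable_indicator measurableSet_Ioc).integrableOn)
      ((hint2.integrable_indicator measurableSet_Ioi).integrableOn)]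
    congr 1
    · rw [setIntegral_indicator measurableSet_Ioc,
        inter_eq_self_of_subset_right Ioc_subset_Ioi_self, integral_const_mul]
      congr 1
      rw [← intervalIntegral.integral_of_le hs.le, integral_rpow (Or.inl hεq)]
      rw [show ε*q-1+1 = ε*q by ring,
        Real.zero_rpow (by positivity : ε*q ≠ 0), sub_zero]
    · rw [setIntegral_indicator measurableSet_Ioi,
        inter_eq_self_of_subset_right (Ioi_subset_Ioi hs.le), integral_const_mul]
      congr 1
      rw [integral_Ioi_rpow_of_lt hdq hs,
        show -(((d:ℝ)+δ)*q)-1+1 = -(((d:ℝ)+δ)*q) by ring, neg_div_neg_eq]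
  have e5 : s ^ (-(a*q)) * s ^ (ε*q) = s ^ (-(((d:ℝ)+δ)*q)) := by
    rw [← Real.rpow_add hs]; congr 1; rw [ha_def]; ring
  have e3 : K1 = ((2:ℝ)^(1+a))^q * r^(δ*q) * s ^ (-(a*q)) := by
    rw [hK1, hD1, Real.mul_rpow (by positivity) (by positivity),
      Real.mul_rpow (by positivity) (by positivity),
      ← Real.rpow_mul hr, ← Real.rpow_mul hs.le, neg_mul]
  have e4 : K2 = (2:ℝ)^q * r^(δ*q) := by
    rw [hK2, hD2, Real.mul_rpow (by norm_num) (by positivity), ← Real.rpow_mul hr]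
  have hIgK : ∫ t in Ioi (0:ℝ), g t = K * r^(δ*q) * s ^ (-(((d:ℝ)+δ)*q)) := by
    rw [hIg, e3, e4, hK_def, ← e5]
    ring
  have h0F : 0 ≤ ∫ t in Ioi (0:ℝ), F t := integral_nonneg_of_ae hFnonneg
  have hle : ∫ t in Ioi (0:ℝ), F t ≤ K * r^(δ*q) * s ^ (-(((d:ℝ)+δ)*q)) := hIgK ▸ hmono
  have hpow := Real.rpow_le_rpow h0F hle (by positivity : (0:ℝ) ≤ 1/q)
  refine hpow.trans_eq ?_
  rw [Real.mul_rpow (by positivity) (by positivity),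
    Real.mul_rpow hK.le (by positivity),
    ← Real.rpow_mul hr, ← Real.rpow_mul hs.le]
  rw [show δ*q*(1/q) = δ by field_simp,
    show -(((d:ℝ)+δ)*q)*(1/q) = -((d:ℝ)+δ) by field_simp]
  rw [Real.rpow_neg hs.le]
  ring
end

section
/- Let 𝒟 be the collection of dyadic intervals of ℝ of the form [j 2^{-k}, (j+1) 2^{-k}). Then the collection {3Q : Q ∈ 𝒟} of tripled dyadic intervals is a disjoint union of 3 families, each of which is 'dyadic-like': for every interval I in the family, its two children (the intervals obtained from the tripling structure, namely the left and right halves of I) belong to the family, every interval is one of the children of another member, and any two members are either nested or disjoint. -/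
open Set

/-- A family of (half-open) intervals is *dyadic-like* if the two halves of each member belong
to the family, every member is a half of another member, and any two members are nested or
disjoint. -/
def DyadicLike (F : Set (Set ℝ)) : Prop :=
  (∀ I ∈ F, ∃ a b : ℝ, a < b ∧ I = Set.Ico a b ∧
      Set.Ico a ((a + b) / 2) ∈ F ∧ Set.Ico ((a + b) / 2) b ∈ F) ∧
  (∀ I ∈ F, ∃ a b : ℝ, a < b ∧ Set.Ico a b ∈ F ∧
      (I = Set.Ico a ((a + b) / 2) ∨ I = Set.Ico ((a + b) / 2) b)) ∧
  (∀ I ∈ F, ∀ J ∈ F, I ⊆ J ∨ J ⊆ I ∨ I ∩ J = ∅)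

/-- The collection `{3Q : Q dyadic}` of tripled dyadic intervals of `ℝ`:
for `Q = [j2^{-k}, (j+1)2^{-k})`, `3Q = [(j-1)2^{-k}, (j+2)2^{-k})`. -/
def TripledDyadic : Set (Set ℝ) :=
  {I | ∃ j k : ℤ, I = Set.Ico (((j : ℝ) - 1) * 2 ^ (-k)) (((j : ℝ) + 2) * 2 ^ (-k))}

namespace Stmt11Aux

/-- The sign `(-1)^k`. -/
def eps (k : ℤ) : ℤ := if Even k then 1 else -1

lemma eps_succ (k : ℤ) : eps (k + 1) = - eps k := by
  unfold eps
  by_cases h : Even k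
  · rw [if_pos h, if_neg (by simp [Int.even_add_one, h])]
  · rw [if_neg h, if_pos (Int.even_add_one.mpr h)]; norm_num

lemma eps_pred (k : ℤ) : eps (k - 1) = - eps k := by
  have h := eps_succ (k - 1)
  rw [sub_add_cancel] at h
  omega

lemma eps_sq (k : ℤ) : eps k * eps k = 1 := by
  unfold eps; split <;> norm_num

/-- The family of tripled dyadic intervals with shift pattern `s`. -/
def fam (s : ℤ) : Set (Set ℝ) :=
  {I | ∃ n k : ℤ, (3 : ℤ) ∣ n - eps k * s ∧
    I = Set.Ico ((n : ℝ) * 2 ^ (-k)) (((n : ℝ) + 3) * 2 ^ (-k))}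

lemma two_zpow_pos (k : ℤ) : (0 : ℝ) < 2 ^ (-k) := by positivity

lemma zpow_succ_half (k : ℤ) : (2 : ℝ) ^ (-(k + 1)) = 2 ^ (-k) / 2 := by
  rw [show -(k + 1) = -k + (-1) by ring, zpow_add₀ (by norm_num : (2:ℝ) ≠ 0), zpow_neg_one]
  ring

lemma zpow_pred_double (k : ℤ) : (2 : ℝ) ^ (-(k - 1)) = 2 ^ (-k) * 2 := by
  rw [show -(k - 1) = -k + 1 by ring, zpow_add₀ (by norm_num : (2:ℝ) ≠ 0), zpow_one]

/-- The congruence is preserved under rescaling. -/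
lemma dvd_shift (s n k : ℤ) (d : ℕ) (h : (3 : ℤ) ∣ n - eps k * s) :
    (3 : ℤ) ∣ n * 2 ^ d - eps (k + d) * s := by
  induction d with
  | zero => simpa using h
  | succ d ih =>
    have h1 : eps (k + ((d : ℕ) + 1 : ℕ)) = - eps (k + d) := by
      rw [show (k + ((d : ℕ) + 1 : ℕ) : ℤ) = (k + d) + 1 by push_cast; ring, eps_succ]
    rw [h1, pow_succ, ← mul_assoc, neg_mul, sub_neg_eq_add]
    obtain ⟨c, hc⟩ := ih
    exact ⟨2 * c + eps (k + d) * s, by linarith⟩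

/-- Key nesting lemma: two members of the same family with comparable scales are
nested or disjoint. -/
lemma key (s n k p l : ℤ) (hn : (3 : ℤ) ∣ n - eps k * s)
    (hp : (3 : ℤ) ∣ p - eps l * s) (hkl : k ≤ l) :
    Set.Ico ((p : ℝ) * 2 ^ (-l)) (((p : ℝ) + 3) * 2 ^ (-l)) ⊆
      Set.Ico ((n : ℝ) * 2 ^ (-k)) (((n : ℝ) + 3) * 2 ^ (-k)) ∨
    Set.Ico ((n : ℝ) * 2 ^ (-k)) (((n : ℝ) + 3) * 2 ^ (-k)) ∩
      Set.Ico ((p : ℝ) * 2 ^ (-l)) (((p : ℝ) + 3) * 2 ^ (-l)) = ∅ := by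
  obtain ⟨d, hd⟩ : ∃ d : ℕ, l = k + d := ⟨(l - k).toNat, by omega⟩
  obtain ⟨N, hN⟩ : ∃ N : ℤ, N = n * 2 ^ d := ⟨_, rfl⟩
  obtain ⟨M, hM⟩ : ∃ M : ℤ, M = N + 3 * 2 ^ d := ⟨_, rfl⟩
  have h2k : (2 : ℝ) ^ (-k) = (2 : ℝ) ^ (d : ℤ) * 2 ^ (-l) := by
    rw [← zpow_add₀ (by norm_num : (2:ℝ) ≠ 0)]
    congr 1; omega
  have hA : (n : ℝ) * 2 ^ (-k) = (N : ℝ) * 2 ^ (-l) := by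
    rw [h2k, hN]
    push_cast [zpow_natCast]
    ring
  have hB : ((n : ℝ) + 3) * 2 ^ (-k) = (M : ℝ) * 2 ^ (-l) := by
    rw [h2k, hM, hN]
    push_cast [zpow_natCast]
    ring
  rw [hA, hB]
  -- the congruence: 3 ∣ p - N
  have hshift := dvd_shift s n k d hn
  rw [← hd, ← hN] at hshift
  have hdvd : (3 : ℤ) ∣ p - N := by
    obtain ⟨c1, hc1⟩ := hshift
    obtain ⟨c2, hc2⟩ := hp
    exact ⟨c2 - c1, by linarith⟩
  have hdvdM : (3 : ℤ) ∣ M - N := ⟨2 ^ d, by rw [hM]; ring⟩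
  have hpow1 : (1 : ℤ) ≤ 2 ^ d := one_le_pow₀ (by norm_num)
  have hMge : N + 3 ≤ M := by rw [hM]; nlinarith
  by_cases hcase : N ≤ p ∧ p + 3 ≤ M
  · left
    apply Set.Ico_subset_Ico
    · have : (N : ℝ) ≤ p := by exact_mod_cast hcase.1
      nlinarith [two_zpow_pos l]
    · have : (p : ℝ) + 3 ≤ M := by exact_mod_cast hcase.2
      nlinarith [two_zpow_pos l]
  · right
    have hsep : p + 3 ≤ N ∨ M ≤ p := by omega
    ext x
    simp only [Set.mem_inter_iff, Set.mem_Ico, Set.mem_empty_iff_false, iff_false, not_and,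
      and_imp]
    intro h1 h2 h3
    rcases hsep with h | h
    · have : ((p : ℝ) + 3) ≤ N := by exact_mod_cast h
      nlinarith [two_zpow_pos l]
    · have : (M : ℝ) ≤ p := by exact_mod_cast h
      nlinarith [two_zpow_pos l]

lemma dyadicLike_fam (s : ℤ) : DyadicLike (fam s) := by
  refine ⟨?_, ?_, ?_⟩
  · -- halves
    rintro I ⟨n, k, h, rfl⟩
    refine ⟨(n : ℝ) * 2 ^ (-k), ((n : ℝ) + 3) * 2 ^ (-k), ?_, rfl, ?_, ?_⟩
    · nlinarith [two_zpow_pos k]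
    · refine ⟨2 * n, k + 1, ?_, ?_⟩
      · rw [eps_succ, neg_mul, sub_neg_eq_add]
        generalize eps k * s = u at h ⊢
        omega
      · rw [zpow_succ_half]
        congr 1 <;> push_cast <;> ring
    · refine ⟨2 * n + 3, k + 1, ?_, ?_⟩
      · rw [eps_succ, neg_mul, sub_neg_eq_add]
        generalize eps k * s = u at h ⊢
        omega
      · rw [zpow_succ_half]
        congr 1 <;> push_cast <;> ring
  · -- parents
    rintro I ⟨n, k, h, rfl⟩
    rcases Int.even_or_odd n with ⟨m, hm⟩ | ⟨m, hm⟩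
    · refine ⟨(m : ℝ) * 2 ^ (-(k - 1)), ((m : ℝ) + 3) * 2 ^ (-(k - 1)), ?_, ?_, Or.inl ?_⟩
      · nlinarith [two_zpow_pos (k - 1)]
      · refine ⟨m, k - 1, ?_, rfl⟩
        rw [eps_pred, neg_mul, sub_neg_eq_add]
        generalize eps k * s = u at h ⊢
        omega
      · rw [zpow_pred_double]
        congr 1 <;> push_cast <;> rw [hm] <;> push_cast <;> ring
    · refine ⟨((m : ℝ) - 1) * 2 ^ (-(k - 1)), (((m : ℝ) - 1) + 3) * 2 ^ (-(k - 1)), ?_, ?_,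
        Or.inr ?_⟩
      · nlinarith [two_zpow_pos (k - 1)]
      · refine ⟨m - 1, k - 1, ?_, by push_cast; ring_nf⟩
        rw [eps_pred, neg_mul, sub_neg_eq_add]
        generalize eps k * s = u at h ⊢
        omega
      · rw [zpow_pred_double]
        congr 1 <;> push_cast <;> rw [hm] <;> push_cast <;> ring
  · -- nested or disjoint
    rintro I ⟨n, k, hn, rfl⟩ J ⟨p, l, hp, rfl⟩
    rcases le_total k l with hkl | hkl
    · rcases key s n k p l hn hp hkl with h | h
      · exact Or.inr (Or.inl h)
      · exact Or.inr (Or.inr h)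
    · rcases key s p l n k hp hn hkl with h | h
      · exact Or.inl h
      · exact Or.inr (Or.inr (by rw [Set.inter_comm]; exact h))

lemma fam_inj {s t n k p l : ℤ}
    (hn : (3 : ℤ) ∣ n - eps k * s) (hp : (3 : ℤ) ∣ p - eps l * t)
    (heq : Set.Ico ((n : ℝ) * 2 ^ (-k)) (((n : ℝ) + 3) * 2 ^ (-k)) =
      Set.Ico ((p : ℝ) * 2 ^ (-l)) (((p : ℝ) + 3) * 2 ^ (-l))) :
    (3 : ℤ) ∣ s - t := by
  have hab : (n : ℝ) * 2 ^ (-k) < ((n : ℝ) + 3) * 2 ^ (-k) := by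
    nlinarith [two_zpow_pos k]
  rw [Set.Ico_eq_Ico_iff (Or.inl hab)] at heq
  obtain ⟨h1, h2⟩ := heq
  have hkl : k = l := by
    have h3 : (2 : ℝ) ^ (-k) = 2 ^ (-l) := by linarith
    have := zpow_right_injective₀ (by norm_num : (0:ℝ) < 2) (by norm_num) h3
    omega
  subst hkl
  have hnp : n = p := by
    have h4 : (n : ℝ) = p := mul_right_cancel₀ (ne_of_gt (two_zpow_pos k)) h1
    exact_mod_cast h4
  subst hnp
  have hst : (3 : ℤ) ∣ eps k * s - eps k * t := by
    obtain ⟨c1, hc1⟩ := hn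
    obtain ⟨c2, hc2⟩ := hp
    exact ⟨c2 - c1, by linarith⟩
  obtain ⟨c, hc⟩ := hst
  refine ⟨eps k * c, ?_⟩
  calc s - t = (eps k * eps k) * s - (eps k * eps k) * t := by rw [eps_sq]; ring
    _ = eps k * (eps k * s - eps k * t) := by ring
    _ = eps k * (3 * c) := by rw [hc]
    _ = 3 * (eps k * c) := by ring

lemma fam_disjoint {s t : ℤ} (hst : ¬ (3 : ℤ) ∣ s - t) : Disjoint (fam s) (fam t) := by
  rw [Set.disjoint_left]
  rintro I ⟨n, k, hn, rfl⟩ ⟨p, l, hp, heq⟩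
  exact hst (fam_inj hn hp heq)

lemma fam_subset_tripled (s : ℤ) : fam s ⊆ TripledDyadic := by
  rintro I ⟨n, k, _, rfl⟩
  refine ⟨n + 1, k, ?_⟩
  congr 1 <;> push_cast <;> ring

theorem stmt11' :
    ∃ F₀ F₁ F₂ : Set (Set ℝ),
      DyadicLike F₀ ∧ DyadicLike F₁ ∧ DyadicLike F₂ ∧
      Disjoint F₀ F₁ ∧ Disjoint F₀ F₂ ∧ Disjoint F₁ F₂ ∧
      F₀ ∪ F₁ ∪ F₂ = TripledDyadic := by
  refine ⟨fam 0, fam 1, fam 2, dyadicLike_fam 0, dyadicLike_fam 1, dyadicLike_fam 2,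
    fam_disjoint (by decide), fam_disjoint (by decide), fam_disjoint (by decide), ?_⟩
  apply Set.Subset.antisymm
  · intro I hI
    rcases hI with (h | h) | h
    · exact fam_subset_tripled 0 h
    · exact fam_subset_tripled 1 h
    · exact fam_subset_tripled 2 h
  · rintro I ⟨j, k, rfl⟩
    obtain ⟨m, hm⟩ : ∃ m : ℤ, m = eps k * (j - 1) := ⟨_, rfl⟩
    obtain ⟨s, hs⟩ : ∃ s : ℤ, s = m % 3 := ⟨_, rfl⟩
    have hms : (3 : ℤ) ∣ m - s ∧ 0 ≤ s ∧ s < 3 := by omega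
    have hdvd : (3 : ℤ) ∣ (j - 1) - eps k * s := by
      obtain ⟨c, hc⟩ := hms.1
      refine ⟨eps k * c, ?_⟩
      calc (j - 1) - eps k * s
          = (eps k * eps k) * (j - 1) - eps k * s := by rw [eps_sq]; ring
        _ = eps k * (m - s) := by rw [hm]; ring
        _ = eps k * (3 * c) := by rw [hc]
        _ = 3 * (eps k * c) := by ring
    have hIeq : Set.Ico (((j : ℝ) - 1) * 2 ^ (-k)) (((j : ℝ) + 2) * 2 ^ (-k)) =
        Set.Ico (((j - 1 : ℤ) : ℝ) * 2 ^ (-k)) ((((j - 1 : ℤ) : ℝ) + 3) * 2 ^ (-k)) := by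
      congr 1 <;> push_cast <;> ring
    have hmem : ∀ u : ℤ, s = u →
        Set.Ico (((j : ℝ) - 1) * 2 ^ (-k)) (((j : ℝ) + 2) * 2 ^ (-k)) ∈ fam u := by
      intro u hu
      exact ⟨j - 1, k, by rw [← hu]; exact hdvd, hIeq⟩
    have : s = 0 ∨ s = 1 ∨ s = 2 := by omega
    rcases this with h | h | h
    · exact Or.inl (Or.inl (hmem 0 h))
    · exact Or.inl (Or.inr (hmem 1 h))
    · exact Or.inr (hmem 2 h)

end Stmt11Aux

/-- Wilson: the tripled dyadic intervals split into three disjoint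
dyadic-like families. -/
theorem stmt11 :
    ∃ F₀ F₁ F₂ : Set (Set ℝ),
      DyadicLike F₀ ∧ DyadicLike F₁ ∧ DyadicLike F₂ ∧
      Disjoint F₀ F₁ ∧ Disjoint F₀ F₂ ∧ Disjoint F₁ F₂ ∧
      F₀ ∪ F₁ ∪ F₂ = TripledDyadic := by
  exact Stmt11Aux.stmt11'
end

section
/- Let 1 < p < ∞ and f = 𝐏_1 be the Poisson kernel 𝐏_1(x) = π^{-1}(1+x²)^{-1} on ℝ, and 𝐏_t(x) = π^{-1} t (x²+t²)^{-1}. Then ‖f‖_{L_p(ℝ)} ≈ 1 and ‖t ∂_t 𝐏_t * f‖_{L_p(ℝ)} ≈ t (t+1)^{−1−1/p'}, uniformly in t > 0, where 𝐏_t * f = 𝐏_{t+1}. Consequently, for any q ∈ (1,∞), (∫_0^∞ ‖t ∂_t 𝐏_t * f‖_{L_p(ℝ)}^q dt/t)^{1/q} ≈ (p')^{1/q}, with constants independent of p and q. -/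
open MeasureTheory Set

/-- The Poisson kernel `𝐏_t(x) = π⁻¹ t/(x²+t²)` on `ℝ`. -/
noncomputable def pK (t x : ℝ) : ℝ := t / (Real.pi * (x ^ 2 + t ^ 2))

/-- `t ∂_t (𝐏_t * 𝐏_1)(x)`, using `𝐏_t * 𝐏_1 = 𝐏_{t+1}`. -/
noncomputable def pg (t x : ℝ) : ℝ := t * deriv (fun u : ℝ => pK (u + 1) x) t

/-- The `L_p(ℝ)` norm `(∫ |h|^p)^{1/p}`. -/
noncomputable def lpN (p : ℝ) (h : ℝ → ℝ) : ℝ := (∫ x : ℝ, |h x| ^ p) ^ (1 / p)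

/-- The conjugate index `p' = p/(p-1)`. -/
noncomputable def pconj (p : ℝ) : ℝ := p / (p - 1)

/-!
Both functions are dilations of fixed profiles: `𝐏_1 = π⁻¹ (1 + x²)⁻¹`, and
`t ∂_t 𝐏_{t+1}(x) = t / (π (t+1)²) · φ(x / (t+1))` with `φ(y) = (y² - 1) / (1 + y²)²`.
A profile dominated by `(1 + y²)⁻¹` and bounded below on an interval of length one has `L_p`
norm between absolute constants, while dilating by `t + 1` multiplies the `L_p` norm by
`(t+1)^{1/p}`; this gives the first two estimates. Raised to the power `q`, the second one turns
the `t`-integral into the beta-prime integral `∫₀^∞ t^{q-1} (1+t)^{-(q + q/p')} dt`, which lies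
between `2^{-(q + q/p')} p'/q` (compare with `t^{-q/p'-1}` on `(1, ∞)`) and `1/q + p'/q`; the
`q`-th root then gives `(p')^{1/q}` up to constants because `q^{1/q} ≤ e`.
-/

open Real

lemma lpN_nonneg (p : ℝ) (h : ℝ → ℝ) : 0 ≤ lpN p h :=
  rpow_nonneg (integral_nonneg fun x => by positivity) _

lemma lpN_const_mul {p : ℝ} (hp : p ≠ 0) (c : ℝ) (h : ℝ → ℝ) :
    lpN p (fun x => c * h x) = |c| * lpN p h := by
  have hI : 0 ≤ ∫ x, |h x| ^ p := integral_nonneg fun x => by positivity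
  simp only [lpN, abs_mul, mul_rpow (abs_nonneg c) (abs_nonneg _), integral_const_mul,
    mul_rpow (rpow_nonneg (abs_nonneg c) p) hI, one_div, rpow_rpow_inv (abs_nonneg c) hp]

lemma lpN_comp_div (p : ℝ) (h : ℝ → ℝ) {s : ℝ} (hs : 0 < s) :
    lpN p (fun x => h (x / s)) = s ^ (1 / p) * lpN p h := by
  have hI : 0 ≤ ∫ x, |h x| ^ p := integral_nonneg fun x => by positivity
  rw [lpN, Measure.integral_comp_div (fun y => |h y| ^ p) s, abs_of_pos hs, smul_eq_mul,
    mul_rpow hs.le hI, lpN]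

lemma abs_rpow_le_inv_one_add_sq {p : ℝ} (hp : 1 ≤ p) {h : ℝ → ℝ}
    (hh : ∀ x, |h x| ≤ (1 + x ^ 2)⁻¹) (x : ℝ) : |h x| ^ p ≤ (1 + x ^ 2)⁻¹ :=
  (rpow_le_self_of_le_one (abs_nonneg _) ((hh x).trans (inv_le_one_of_one_le₀ (by nlinarith)))
    hp).trans (hh x)

lemma integrable_abs_rpow_of_abs_le_inv_one_add_sq {p : ℝ} (hp : 1 ≤ p) {h : ℝ → ℝ}
    (hm : Measurable h) (hh : ∀ x, |h x| ≤ (1 + x ^ 2)⁻¹) :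
    Integrable (fun x => |h x| ^ p) := by
  refine integrable_inv_one_add_sq.mono (hm.abs.pow_const p).aestronglyMeasurable
    (.of_forall fun x => ?_)
  rw [norm_of_nonneg (by positivity), norm_of_nonneg (by positivity)]
  exact abs_rpow_le_inv_one_add_sq hp hh x

lemma lpN_le_pi_of_abs_le_inv_one_add_sq {p : ℝ} (hp : 1 ≤ p) {h : ℝ → ℝ}
    (hm : Measurable h) (hh : ∀ x, |h x| ≤ (1 + x ^ 2)⁻¹) : lpN p h ≤ π := by
  have hI : ∫ x, |h x| ^ p ≤ π := integral_univ_inv_one_add_sq ▸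
    integral_mono (integrable_abs_rpow_of_abs_le_inv_one_add_sq hp hm hh)
      integrable_inv_one_add_sq (abs_rpow_le_inv_one_add_sq hp hh)
  calc lpN p h ≤ π ^ (1 / p) :=
        rpow_le_rpow (integral_nonneg fun x => by positivity) hI (by positivity)
    _ ≤ π := rpow_le_self_of_one_le (by linarith [pi_gt_three]) (by rw [div_le_one] <;> linarith)

lemma le_lpN_of_le_abs_on_Icc {p : ℝ} (hp : 0 < p) {h : ℝ → ℝ}
    (hi : Integrable (fun x => |h x| ^ p)) {a c : ℝ} (hc : 0 ≤ c)
    (hh : ∀ x ∈ Icc a (a + 1), c ≤ |h x|) : c ≤ lpN p h := by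
  have hI : c ^ p ≤ ∫ x, |h x| ^ p := by
    calc c ^ p = ∫ x in Icc a (a + 1), c ^ p := by simp
      _ ≤ ∫ x in Icc a (a + 1), |h x| ^ p :=
          setIntegral_mono_on (by simp) hi.integrableOn measurableSet_Icc
            fun x hx => rpow_le_rpow hc (hh x hx) hp.le
      _ ≤ ∫ x, |h x| ^ p := setIntegral_le_integral hi (.of_forall fun x => by positivity)
  calc c = (c ^ p) ^ (1 / p) := by rw [one_div, rpow_rpow_inv hc hp.ne']
    _ ≤ lpN p h := rpow_le_rpow (by positivity) hI (by positivity)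

lemma lpN_pK_one_bounds {p : ℝ} (hp : 1 ≤ p) :
    1 / (2 * π) ≤ lpN p (pK 1) ∧ lpN p (pK 1) ≤ 1 := by
  have hpK : pK 1 = fun x => π⁻¹ * (1 + x ^ 2)⁻¹ := by
    ext x; rw [pK, one_pow, add_comm (x ^ 2), one_div, mul_inv]
  have hle (x : ℝ) : |(1 + x ^ 2)⁻¹| ≤ (1 + x ^ 2)⁻¹ := (abs_of_pos (by positivity)).le
  have hm : Measurable fun x : ℝ => (1 + x ^ 2)⁻¹ := by fun_prop
  have hlow : 1 / 2 ≤ lpN p fun x => (1 + x ^ 2)⁻¹ :=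
    le_lpN_of_le_abs_on_Icc (by linarith) (integrable_abs_rpow_of_abs_le_inv_one_add_sq hp hm hle)
      (a := -1 / 2) (by norm_num) fun x hx => by
        rw [abs_of_pos (by positivity), one_div, inv_le_inv₀ (by norm_num) (by positivity)]
        nlinarith [hx.1, hx.2]
  have hup := lpN_le_pi_of_abs_le_inv_one_add_sq hp hm hle
  rw [hpK, lpN_const_mul (by linarith), abs_of_pos (inv_pos.2 pi_pos)]
  constructor
  · calc 1 / (2 * π) = π⁻¹ * (1 / 2) := by ring
      _ ≤ _ := by gcongr
  · calc π⁻¹ * _ ≤ π⁻¹ * π := by gcongr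
      _ = 1 := inv_mul_cancel₀ pi_ne_zero

lemma hasDerivAt_pK (x : ℝ) {s : ℝ} (hs : s ≠ 0) :
    HasDerivAt (fun u => pK u x) ((x ^ 2 - s ^ 2) / (π * (x ^ 2 + s ^ 2) ^ 2)) s := by
  have hD : π * (x ^ 2 + s ^ 2) ≠ 0 := by positivity
  refine ((hasDerivAt_id' s).div (((hasDerivAt_pow 2 s).const_add (x ^ 2)).const_mul π)
    hD).congr_deriv ?_
  field_simp
  ring

noncomputable def poissonDerivProfile (y : ℝ) : ℝ := (y ^ 2 - 1) / (1 + y ^ 2) ^ 2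

lemma pg_eq_mul_poissonDerivProfile {t : ℝ} (ht : t + 1 ≠ 0) (x : ℝ) :
    pg t x = t / (π * (t + 1) ^ 2) * poissonDerivProfile (x / (t + 1)) := by
  rw [pg, ((hasDerivAt_pK x ht).comp_add_const t 1).deriv, poissonDerivProfile]
  field_simp
  ring

lemma abs_poissonDerivProfile_le (y : ℝ) : |poissonDerivProfile y| ≤ (1 + y ^ 2)⁻¹ := by
  have h : |y ^ 2 - 1| ≤ 1 + y ^ 2 := abs_le.2 ⟨by nlinarith, by nlinarith⟩
  rw [poissonDerivProfile, abs_div, abs_of_pos (by positivity : (0 : ℝ) < (1 + y ^ 2) ^ 2),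
    div_le_iff₀ (by positivity)]
  calc |y ^ 2 - 1| ≤ 1 + y ^ 2 := h
    _ = (1 + y ^ 2)⁻¹ * (1 + y ^ 2) ^ 2 := by field_simp

lemma lpN_poissonDerivProfile_bounds {p : ℝ} (hp : 1 ≤ p) :
    1 / 4 ≤ lpN p poissonDerivProfile ∧ lpN p poissonDerivProfile ≤ π := by
  have hm : Measurable poissonDerivProfile := by unfold poissonDerivProfile; fun_prop
  refine ⟨le_lpN_of_le_abs_on_Icc (by linarith)
    (integrable_abs_rpow_of_abs_le_inv_one_add_sq hp hm abs_poissonDerivProfile_le)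
    (a := -1 / 2) (by norm_num) fun y hy => ?_,
    lpN_le_pi_of_abs_le_inv_one_add_sq hp hm abs_poissonDerivProfile_le⟩
  have hy2 : y ^ 2 ≤ 1 / 4 := by nlinarith [hy.1, hy.2]
  rw [poissonDerivProfile, abs_div, abs_of_nonpos (by linarith), abs_of_pos (by positivity),
    le_div_iff₀ (by positivity)]
  nlinarith

lemma one_div_pconj {p : ℝ} (hp : p ≠ 0) : 1 / pconj p = 1 - 1 / p := by
  rw [pconj, one_div_div]
  field_simp

lemma one_le_pconj {p : ℝ} (hp : 1 < p) : 1 ≤ pconj p := by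
  rw [pconj, le_div_iff₀ (by linarith)]; linarith

lemma lpN_pg {p t : ℝ} (hp : p ≠ 0) (ht : 0 < t) :
    lpN p (pg t) = lpN p poissonDerivProfile / π * (t / (t + 1) ^ (1 + 1 / pconj p)) := by
  have hs : 0 < t + 1 := by linarith
  have hexp : (t + 1) ^ (1 + 1 / pconj p) = (t + 1) ^ 2 / (t + 1) ^ (1 / p) := by
    rw [one_div_pconj hp, ← rpow_natCast, ← rpow_sub hs]
    congr 1
    push_cast
    ring
  have hpg : pg t = fun x => t / (π * (t + 1) ^ 2) * poissonDerivProfile (x / (t + 1)) :=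
    funext (pg_eq_mul_poissonDerivProfile hs.ne')
  rw [hpg, lpN_const_mul hp, lpN_comp_div p _ hs, abs_of_pos (by positivity), hexp]
  have : 0 < (t + 1) ^ (1 / p) := rpow_pos_of_pos hs _
  field_simp

section BetaPrime

variable {a b : ℝ}

/-- Its integral over `(0, ∞)` is the Beta function `B(a, b)`. -/
noncomputable def betaPrimeIntegrand (a b t : ℝ) : ℝ := t ^ (a - 1) * (t + 1) ^ (-(a + b))

lemma measurable_betaPrimeIntegrand : Measurable (betaPrimeIntegrand a b) := by
  unfold betaPrimeIntegrand; fun_prop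

lemma betaPrimeIntegrand_nonneg {t : ℝ} (ht : 0 ≤ t) : 0 ≤ betaPrimeIntegrand a b t := by
  unfold betaPrimeIntegrand; positivity

lemma integral_betaPrimeIntegrand_nonneg : 0 ≤ ∫ t in Ioi 0, betaPrimeIntegrand a b t :=
  setIntegral_nonneg measurableSet_Ioi fun _ ht => betaPrimeIntegrand_nonneg (le_of_lt ht)

lemma betaPrimeIntegrand_le_rpow_sub_one (hab : 0 ≤ a + b) {t : ℝ} (ht : 0 ≤ t) :
    betaPrimeIntegrand a b t ≤ t ^ (a - 1) :=
  mul_le_of_le_one_right (by positivity)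
    (rpow_le_one_of_one_le_of_nonpos (by linarith) (by linarith))

lemma betaPrimeIntegrand_le_rpow_neg_sub_one (hab : 0 ≤ a + b) {t : ℝ} (ht : 0 < t) :
    betaPrimeIntegrand a b t ≤ t ^ (-b - 1) := by
  calc betaPrimeIntegrand a b t ≤ t ^ (a - 1) * t ^ (-(a + b)) :=
        mul_le_mul_of_nonneg_left (rpow_le_rpow_of_nonpos ht (by linarith) (by linarith))
          (by positivity)
    _ = t ^ (-b - 1) := by rw [← rpow_add ht]; ring_nf

lemma two_rpow_mul_le_betaPrimeIntegrand (hab : 0 ≤ a + b) {t : ℝ} (ht : 1 ≤ t) :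
    2 ^ (-(a + b)) * t ^ (-b - 1) ≤ betaPrimeIntegrand a b t := by
  have ht0 : 0 < t := by linarith
  calc 2 ^ (-(a + b)) * t ^ (-b - 1) = t ^ (a - 1) * (2 * t) ^ (-(a + b)) := by
        rw [mul_rpow zero_le_two ht0.le, mul_left_comm, ← rpow_add ht0]; ring_nf
    _ ≤ betaPrimeIntegrand a b t :=
        mul_le_mul_of_nonneg_left (rpow_le_rpow_of_nonpos (by linarith) (by linarith)
          (by linarith)) (by positivity)

lemma integrableOn_rpow_sub_one_Ioc (ha : 0 < a) :
    IntegrableOn (fun t => t ^ (a - 1)) (Ioc (0 : ℝ) 1) :=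
  (intervalIntegral.intervalIntegrable_rpow' (by linarith)).1

lemma integral_rpow_sub_one_Ioc (ha : 0 < a) : ∫ t in Ioc (0 : ℝ) 1, t ^ (a - 1) = 1 / a := by
  rw [← intervalIntegral.integral_of_le zero_le_one, integral_rpow (.inl (by linarith))]
  simp [zero_rpow ha.ne']

lemma integral_rpow_neg_sub_one_Ioi (hb : 0 < b) :
    ∫ t in Ioi (1 : ℝ), t ^ (-b - 1) = 1 / b := by
  rw [integral_Ioi_rpow_of_lt (by linarith : -b - 1 < -1) zero_lt_one]
  simp

lemma integrableOn_betaPrimeIntegrand (ha : 0 < a) (hb : 0 < b) :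
    IntegrableOn (betaPrimeIntegrand a b) (Ioi 0) := by
  rw [← Ioc_union_Ioi_eq_Ioi zero_le_one, integrableOn_union]
  constructor
  · refine (integrableOn_rpow_sub_one_Ioc ha).mono'
      measurable_betaPrimeIntegrand.aestronglyMeasurable
      (ae_restrict_of_forall_mem measurableSet_Ioc fun t ht => ?_)
    rw [norm_of_nonneg (betaPrimeIntegrand_nonneg ht.1.le)]
    exact betaPrimeIntegrand_le_rpow_sub_one (by linarith) ht.1.le
  · refine (integrableOn_Ioi_rpow_of_lt (by linarith : -b - 1 < -1) zero_lt_one).mono'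
      measurable_betaPrimeIntegrand.aestronglyMeasurable
      (ae_restrict_of_forall_mem measurableSet_Ioi fun t ht => ?_)
    have ht0 : (0 : ℝ) < t := zero_lt_one.trans ht
    rw [norm_of_nonneg (betaPrimeIntegrand_nonneg ht0.le)]
    exact betaPrimeIntegrand_le_rpow_neg_sub_one (by linarith) ht0

lemma integral_betaPrimeIntegrand_le (ha : 0 < a) (hb : 0 < b) :
    ∫ t in Ioi 0, betaPrimeIntegrand a b t ≤ 1 / a + 1 / b := by
  have hi := integrableOn_betaPrimeIntegrand ha hb
  rw [← Ioc_union_Ioi_eq_Ioi zero_le_one, setIntegral_union (Ioc_disjoint_Ioi le_rfl)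
    measurableSet_Ioi (hi.mono_set Ioc_subset_Ioi_self) (hi.mono_set (Ioi_subset_Ioi zero_le_one)),
    ← integral_rpow_sub_one_Ioc ha, ← integral_rpow_neg_sub_one_Ioi hb]
  gcongr ?_ + ?_
  · exact setIntegral_mono_on (hi.mono_set Ioc_subset_Ioi_self) (integrableOn_rpow_sub_one_Ioc ha)
      measurableSet_Ioc fun t ht => betaPrimeIntegrand_le_rpow_sub_one (by linarith) ht.1.le
  · exact setIntegral_mono_on (hi.mono_set (Ioi_subset_Ioi zero_le_one))
      (integrableOn_Ioi_rpow_of_lt (by linarith : -b - 1 < -1) zero_lt_one) measurableSet_Ioi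
      fun t ht => betaPrimeIntegrand_le_rpow_neg_sub_one (by linarith) (zero_lt_one.trans ht)

lemma le_integral_betaPrimeIntegrand (ha : 0 < a) (hb : 0 < b) :
    2 ^ (-(a + b)) / b ≤ ∫ t in Ioi 0, betaPrimeIntegrand a b t := by
  have hi := integrableOn_betaPrimeIntegrand ha hb
  calc 2 ^ (-(a + b)) / b = ∫ t in Ioi 1, 2 ^ (-(a + b)) * t ^ (-b - 1) := by
        rw [integral_const_mul, integral_rpow_neg_sub_one_Ioi hb, mul_one_div]
    _ ≤ ∫ t in Ioi 1, betaPrimeIntegrand a b t :=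
        setIntegral_mono_on
          ((integrableOn_Ioi_rpow_of_lt (by linarith : -b - 1 < -1) zero_lt_one).const_mul _)
          (hi.mono_set (Ioi_subset_Ioi zero_le_one)) measurableSet_Ioi
          fun t ht => two_rpow_mul_le_betaPrimeIntegrand (by linarith) (le_of_lt ht)
    _ ≤ ∫ t in Ioi 0, betaPrimeIntegrand a b t :=
        setIntegral_mono_set hi
          (ae_restrict_of_forall_mem measurableSet_Ioi fun t ht =>
            betaPrimeIntegrand_nonneg (le_of_lt ht))
          (Ioi_subset_Ioi zero_le_one).eventuallyLE

end BetaPrime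

lemma rpow_one_div_self_le_exp_one {x : ℝ} (hx : 0 < x) : x ^ (1 / x) ≤ exp 1 := by
  rw [rpow_def_of_pos hx, exp_le_exp, mul_one_div, div_le_one hx]
  linarith [log_le_sub_one_of_pos hx]

section BetaPrimeRoot

variable {q r : ℝ}

lemma rpow_one_div_integral_betaPrimeIntegrand_le (hq : 1 ≤ q) (hr : 1 ≤ r) :
    (∫ t in Ioi 0, betaPrimeIntegrand q (q / r) t) ^ (1 / q) ≤ 2 * r ^ (1 / q) := by
  have hI := integral_betaPrimeIntegrand_le (by linarith : 0 < q)
    (div_pos (by linarith : 0 < q) (by linarith : 0 < r))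
  have hI2 : ∫ t in Ioi 0, betaPrimeIntegrand q (q / r) t ≤ 2 * r := by
    rw [one_div_div] at hI
    calc _ ≤ 1 / q + r / q := hI
      _ ≤ 1 + r :=
          add_le_add (div_le_one_of_le₀ hq (by linarith)) (div_le_self (by linarith) hq)
      _ ≤ 2 * r := by linarith
  calc _ ≤ (2 * r) ^ (1 / q) :=
        rpow_le_rpow integral_betaPrimeIntegrand_nonneg hI2 (by positivity)
    _ = 2 ^ (1 / q) * r ^ (1 / q) := mul_rpow zero_le_two (by linarith)
    _ ≤ 2 * r ^ (1 / q) := by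
        gcongr
        exact rpow_le_self_of_one_le one_le_two (by rw [div_le_one] <;> linarith)

lemma le_rpow_one_div_integral_betaPrimeIntegrand (hq : 0 < q) (hr : 1 ≤ r) :
    r ^ (1 / q) / 12 ≤ (∫ t in Ioi 0, betaPrimeIntegrand q (q / r) t) ^ (1 / q) := by
  have hr0 : 0 < r := by linarith
  have hI := le_integral_betaPrimeIntegrand hq (div_pos hq hr0)
  have hI4 : (1 / 4) ^ q * (r / q) ≤ ∫ t in Ioi 0, betaPrimeIntegrand q (q / r) t := by
    have h4 : (1 / 4 : ℝ) ^ q = 2 ^ (-(2 * q)) := by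
      rw [rpow_neg zero_le_two, rpow_mul zero_le_two, ← inv_rpow (by positivity)]
      norm_num
    calc (1 / 4) ^ q * (r / q) ≤ 2 ^ (-(q + q / r)) * (r / q) := by
          rw [h4]
          gcongr
          · exact one_le_two
          · linarith [div_le_self hq.le hr]
      _ = 2 ^ (-(q + q / r)) / (q / r) := by rw [div_div_eq_mul_div, mul_div_assoc]
      _ ≤ _ := hI
  have he : q ^ (1 / q) ≤ 3 :=
    (rpow_one_div_self_le_exp_one hq).trans (by linarith [exp_one_lt_d9])
  calc r ^ (1 / q) / 12 ≤ 1 / 4 * (r ^ (1 / q) / q ^ (1 / q)) := by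
        rw [show r ^ (1 / q) / 12 = 1 / 4 * (r ^ (1 / q) / 3) by ring]
        gcongr
    _ = ((1 / 4) ^ q * (r / q)) ^ (1 / q) := by
        rw [mul_rpow (by positivity) (by positivity), div_rpow hr0.le hq.le, one_div q,
          rpow_rpow_inv (by norm_num) hq.ne']
    _ ≤ _ := rpow_le_rpow (by positivity) hI4 (by positivity)

end BetaPrimeRoot

lemma lpN_pg_rpow_div_self {p q t : ℝ} (hp : p ≠ 0) (ht : 0 < t) :
    lpN p (pg t) ^ q / t =
      (lpN p poissonDerivProfile / π) ^ q * betaPrimeIntegrand q (q / pconj p) t := by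
  have hs : 0 < t + 1 := by linarith
  have hK : 0 ≤ lpN p poissonDerivProfile / π := by
    have := lpN_nonneg p poissonDerivProfile; positivity
  rw [lpN_pg hp ht, mul_rpow hK (by positivity), div_rpow ht.le (by positivity),
    ← rpow_mul hs.le, betaPrimeIntegrand, rpow_sub_one ht.ne', rpow_neg hs.le]
  field_simp

lemma integral_lpN_pg_rpow_div_self {p q : ℝ} (hp : p ≠ 0) :
    ∫ t in Ioi 0, lpN p (pg t) ^ q / t =
      (lpN p poissonDerivProfile / π) ^ q *
        ∫ t in Ioi 0, betaPrimeIntegrand q (q / pconj p) t := by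
  rw [← integral_const_mul]
  exact setIntegral_congr_fun measurableSet_Ioi fun t ht => lpN_pg_rpow_div_self hp ht

lemma lpN_poissonDerivProfile_div_pi_bounds {p : ℝ} (hp : 1 ≤ p) :
    1 / (4 * π) ≤ lpN p poissonDerivProfile / π ∧ lpN p poissonDerivProfile / π ≤ 1 := by
  obtain ⟨hlow, hup⟩ := lpN_poissonDerivProfile_bounds hp
  refine ⟨?_, (div_le_one pi_pos).2 hup⟩
  rw [← div_div]
  gcongr

lemma lpN_pg_bounds {p t : ℝ} (hp : 1 ≤ p) (ht : 0 < t) :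
    1 / (4 * π) * (t / (t + 1) ^ (1 + 1 / pconj p)) ≤ lpN p (pg t) ∧
      lpN p (pg t) ≤ t / (t + 1) ^ (1 + 1 / pconj p) := by
  obtain ⟨hlow, hup⟩ := lpN_poissonDerivProfile_div_pi_bounds hp
  have hT : 0 ≤ t / (t + 1) ^ (1 + 1 / pconj p) := by positivity
  rw [lpN_pg (by positivity) ht]
  exact ⟨by gcongr, mul_le_of_le_one_left hT hup⟩

lemma rpow_one_div_integral_lpN_pg_bounds {p q : ℝ} (hp : 1 < p) (hq : 1 ≤ q) :
    1 / (48 * π) * pconj p ^ (1 / q) ≤ (∫ t in Ioi 0, lpN p (pg t) ^ q / t) ^ (1 / q) ∧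
      (∫ t in Ioi 0, lpN p (pg t) ^ q / t) ^ (1 / q) ≤ 2 * pconj p ^ (1 / q) := by
  obtain ⟨hKlow, hKup⟩ := lpN_poissonDerivProfile_div_pi_bounds hp.le
  have hK : 0 ≤ lpN p poissonDerivProfile / π :=
    (by positivity : (0 : ℝ) ≤ 1 / (4 * π)).trans hKlow
  have hI : 0 ≤ ∫ t in Ioi 0, betaPrimeIntegrand q (q / pconj p) t :=
    integral_betaPrimeIntegrand_nonneg
  rw [integral_lpN_pg_rpow_div_self (by positivity), mul_rpow (rpow_nonneg hK q) hI, one_div q,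
    rpow_rpow_inv hK (by positivity), ← one_div]
  have hp' := one_le_pconj hp
  have hlow := le_rpow_one_div_integral_betaPrimeIntegrand (by linarith : 0 < q) hp'
  have hup := rpow_one_div_integral_betaPrimeIntegrand_le hq hp'
  have hr : 0 ≤ pconj p ^ (1 / q) := rpow_nonneg (by linarith) _
  constructor
  · calc 1 / (48 * π) * pconj p ^ (1 / q) = 1 / (4 * π) * (pconj p ^ (1 / q) / 12) := by ring
      _ ≤ _ := by gcongr
  · calc _ ≤ 1 * (2 * pconj p ^ (1 / q)) := by gcongr
      _ = _ := one_mul _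

/-- for `f = 𝐏_1`, `‖f‖_p ≈ 1`, `‖t∂_t 𝐏_t * f‖_p ≈ t(t+1)^{-1-1/p'}`, and
`(∫_0^∞ ‖t∂_t 𝐏_t * f‖_p^q dt/t)^{1/q} ≈ (p')^{1/q}`, with absolute constants. -/
theorem stmt17 :
    ∃ c C : ℝ, 0 < c ∧ 0 < C ∧ ∀ p : ℝ, 1 < p →
      (c ≤ lpN p (pK 1) ∧ lpN p (pK 1) ≤ C) ∧
      (∀ t : ℝ, 0 < t →
        c * (t / (t + 1) ^ (1 + 1 / pconj p)) ≤ lpN p (pg t) ∧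
        lpN p (pg t) ≤ C * (t / (t + 1) ^ (1 + 1 / pconj p))) ∧
      (∀ q : ℝ, 1 < q →
        c * pconj p ^ (1 / q)
            ≤ (∫ t in Ioi (0 : ℝ), lpN p (pg t) ^ q / t) ^ (1 / q) ∧
        (∫ t in Ioi (0 : ℝ), lpN p (pg t) ^ q / t) ^ (1 / q)
            ≤ C * pconj p ^ (1 / q)) := by
  have hc : 1 / (48 * π) ≤ 1 / (4 * π) := by gcongr; norm_num
  refine ⟨1 / (48 * π), 2, by positivity, two_pos, fun p hp => ⟨?_, fun t ht => ?_, fun q hq =>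
    rpow_one_div_integral_lpN_pg_bounds hp hq.le⟩⟩
  · obtain ⟨hlow, hup⟩ := lpN_pK_one_bounds hp.le
    exact ⟨hc.trans (le_trans (by gcongr; norm_num) hlow), hup.trans one_le_two⟩
  · obtain ⟨hlow, hup⟩ := lpN_pg_bounds hp.le ht
    have hT : 0 ≤ t / (t + 1) ^ (1 + 1 / pconj p) := by positivity
    exact ⟨le_trans (by gcongr) hlow, hup.trans (le_mul_of_one_le_left hT one_le_two)⟩
end

section
/- Let 1 < p ≤ q < ∞, s > 0, and f = 𝐏_s the Poisson kernel on ℝ. Then for x ≥ 6s, (∫_{x/3−s}^{x/2−s} |t ∂_t 𝐏_t(f)(x)|^q dt/t)^{1/q} ≥ c/x for an absolute constant c > 0, and consequently ‖G_q^𝐏(f)‖_{L_p(ℝ)} ≥ c' (p−1)^{-1} s^{−1/p'} while ‖f‖_{L_p(ℝ)} ≤ C s^{−1/p'}; hence the best constant L in ‖G_q^𝐏(f)‖_{L_p} ≤ L‖f‖_{L_p} over all f ∈ L_p(ℝ) satisfies L ≳ p' as p → 1. -/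
open MeasureTheory Set

/-- The Poisson integral `𝐏_t * h`. -/
noncomputable def pconv (t : ℝ) (h : ℝ → ℝ) (x : ℝ) : ℝ := ∫ y : ℝ, pK t (x - y) * h y

/-- `t ∂_t (𝐏_t * h)(x)`. -/
noncomputable def ptD (t : ℝ) (h : ℝ → ℝ) (x : ℝ) : ℝ :=
  t * deriv (fun u : ℝ => pconv u h x) t

/-- The Littlewood–Paley `g`-function `G_q^𝐏 h (x) = (∫_0^∞ |t∂_t(𝐏_t*h)(x)|^q dt/t)^{1/q}`. -/
noncomputable def pG (q : ℝ) (h : ℝ → ℝ) (x : ℝ) : ℝ :=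
  (∫ t in Ioi (0 : ℝ), |ptD t h x| ^ q / t) ^ (1 / q)

/-!
The semigroup identity `𝐏_t * 𝐏_s = 𝐏_{t+s}`, obtained from an explicit primitive of
`y ↦ 𝐏_t(x - y) 𝐏_s(y)`, gives `t ∂_t 𝐏_t(f)(x) = t ∂_t 𝐏_{t+s}(x)` in closed form. On the window
`x/3 < t + s < x/2` this is at least `1/(50x)`, so `G_q^𝐏 f(x) ≳ 1/x` for `x ≥ 6s` and
`‖G_q^𝐏 f‖_p^p ≳ ∫_{6s}^∞ x^{-p} dx = (6s)^{1-p}/(p - 1)`; taking the `p`-th root costs only a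
bounded factor because `(p - 1)^{(p-1)/p} ≥ e^{-1}`. On the other side
`‖𝐏_s‖_p^p ≤ ‖𝐏_s‖_∞^{p-1} ‖𝐏_s‖_1 = (πs)^{1-p}`, and comparing the two bounds gives `L ≳ p'`.
The estimate `|t ∂_t 𝐏_{t+s}(x)| ≤ t/(x² + s² + t²)` yields `G_q^𝐏 f(x) ≤ 4/(|x| + s)`, which
makes all the integrals above finite, so none of them is a junk value.
-/

open Filter Topology ProbabilityTheory

lemma pK_pos {t : ℝ} (ht : 0 < t) (x : ℝ) : 0 < pK t x := by
  unfold pK; positivity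

lemma continuous_pK {t : ℝ} (ht : 0 < t) : Continuous (pK t) :=
  continuous_const.div (by fun_prop) fun x => by positivity

lemma pK_le {t : ℝ} (ht : 0 < t) (x : ℝ) : pK t x ≤ (Real.pi * t)⁻¹ := by
  rw [pK, div_le_iff₀ (by positivity)]
  field_simp
  nlinarith [Real.pi_pos, sq_nonneg x]

lemma pK_eq_cauchyPDFReal {t : ℝ} (ht : 0 ≤ t) : pK t = cauchyPDFReal 0 t.toNNReal := by
  ext x
  rw [pK, cauchyPDFReal_def, Real.coe_toNNReal t ht, sub_zero]
  field_simp

lemma integrable_pK {t : ℝ} (ht : 0 ≤ t) : Integrable (pK t) := by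
  rw [pK_eq_cauchyPDFReal ht]; exact integrable_cauchyPDFReal 0

lemma integral_pK {t : ℝ} (ht : 0 < t) : ∫ x, pK t x = 1 := by
  rw [pK_eq_cauchyPDFReal ht.le]
  exact integral_cauchyPDFReal_eq_one 0 (by simpa using ht)

lemma tendsto_log_sq_add_sq_sub_log {l : Filter ℝ} (hl : Tendsto (·⁻¹) l (𝓝 0))
    (hne : ∀ᶠ y in l, y ≠ 0) (x : ℝ) {s t : ℝ} (ht : 0 < t) :
    Tendsto (fun y => Real.log (y ^ 2 + s ^ 2) - Real.log ((x - y) ^ 2 + t ^ 2)) l (𝓝 0) := by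
  have hcont : ContinuousAt
      (fun u : ℝ => Real.log ((1 + (s * u) ^ 2) / ((x * u - 1) ^ 2 + (t * u) ^ 2))) 0 :=
    (continuousAt_const.add (by fun_prop)).div (by fun_prop) (by norm_num) |>.log (by norm_num)
  have hlim := hcont.tendsto.comp hl
  simp only [mul_zero, zero_pow two_ne_zero, add_zero, zero_sub, neg_one_sq, div_one,
    Real.log_one] at hlim
  refine hlim.congr' ?_
  filter_upwards [hne] with y hy
  have hd : (x - y) ^ 2 + t ^ 2 ≠ 0 := by positivity
  rw [Function.comp_apply, ← Real.log_div (by positivity) hd]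
  congr 1
  field_simp

lemma tendsto_arctan_sub_div_atTop {c : ℝ} (hc : 0 < c) (x : ℝ) :
    Tendsto (fun y => Real.arctan ((y - x) / c)) atTop (𝓝 (Real.pi / 2)) :=
  (tendsto_nhds_of_tendsto_nhdsWithin Real.tendsto_arctan_atTop).comp
    ((tendsto_atTop_add_const_right _ (-x) tendsto_id).atTop_div_const hc)

lemma tendsto_arctan_sub_div_atBot {c : ℝ} (hc : 0 < c) (x : ℝ) :
    Tendsto (fun y => Real.arctan ((y - x) / c)) atBot (𝓝 (-(Real.pi / 2))) :=
  (tendsto_nhds_of_tendsto_nhdsWithin Real.tendsto_arctan_atBot).comp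
    ((tendsto_atBot_add_const_right _ (-x) tendsto_id).atBot_div_const hc)

-- Read off from the partial fraction decomposition of `y ↦ 𝐏_t(x - y) 𝐏_s(y)`.
noncomputable def pKConvPrimitive (t s x y : ℝ) : ℝ :=
  t * s / (Real.pi ^ 2 * ((x ^ 2 + (t + s) ^ 2) * (x ^ 2 + (t - s) ^ 2))) *
    (x * (Real.log (y ^ 2 + s ^ 2) - Real.log ((x - y) ^ 2 + t ^ 2)) +
      (x ^ 2 + t ^ 2 - s ^ 2) / s * Real.arctan (y / s) +
      (x ^ 2 - t ^ 2 + s ^ 2) / t * Real.arctan ((y - x) / t))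

lemma hasDerivAt_pKConvPrimitive {t s x : ℝ} (ht : 0 < t) (hs : 0 < s)
    (hΔ : x ^ 2 + (t - s) ^ 2 ≠ 0) (y : ℝ) :
    HasDerivAt (pKConvPrimitive t s x) (pK t (x - y) * pK s y) y := by
  have hdist : (x - y) ^ 2 + t ^ 2 ≠ 0 := by positivity
  have hlog₁ : HasDerivAt (fun y => Real.log (y ^ 2 + s ^ 2)) (2 * y / (y ^ 2 + s ^ 2)) y := by
    simpa using ((hasDerivAt_pow 2 y).add_const (s ^ 2)).log (by positivity)
  have hlog₂ : HasDerivAt (fun y => Real.log ((x - y) ^ 2 + t ^ 2))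
      (-(2 * (x - y)) / ((x - y) ^ 2 + t ^ 2)) y := by
    simpa using ((((hasDerivAt_id y).const_sub x).pow 2).add_const (t ^ 2)).log hdist
  have harctan₁ : HasDerivAt (fun y => Real.arctan (y / s)) (1 / (1 + (y / s) ^ 2) * (1 / s)) y :=
    (Real.hasDerivAt_arctan _).comp y ((hasDerivAt_id y).div_const s)
  have harctan₂ : HasDerivAt (fun y => Real.arctan ((y - x) / t))
      (1 / (1 + ((y - x) / t) ^ 2) * (1 / t)) y :=
    (Real.hasDerivAt_arctan _).comp y (((hasDerivAt_id y).sub_const x).div_const t)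
  refine (((hlog₁.sub hlog₂).const_mul x |>.add (harctan₁.const_mul _)).add
    (harctan₂.const_mul _)).const_mul _ |>.congr_deriv ?_
  have h₁ : (1:ℝ) + (y / s) ^ 2 ≠ 0 := by positivity
  have h₂ : (1:ℝ) + ((y - x) / t) ^ 2 ≠ 0 := by positivity
  have h₃ : y ^ 2 + s ^ 2 ≠ 0 := by positivity
  simp only [pK]
  field_simp
  ring

lemma integrable_pK_mul_pK {t s : ℝ} (ht : 0 < t) (hs : 0 < s) (x : ℝ) :
    Integrable (fun y => pK t (x - y) * pK s y) :=
  (integrable_pK hs.le).bdd_mul (((continuous_pK ht).comp (by fun_prop)).aestronglyMeasurable)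
    (.of_forall fun y => by rw [Real.norm_of_nonneg (pK_pos ht _).le]; exact pK_le ht _)

lemma pconv_pK_of_ne_zero {t s x : ℝ} (ht : 0 < t) (hs : 0 < s) (hx : x ≠ 0) :
    pconv t (pK s) x = pK (t + s) x := by
  have hlim {l : Filter ℝ} {θ : ℝ} (hl : Tendsto (·⁻¹) l (𝓝 0)) (hne : ∀ᶠ y in l, y ≠ 0)
      (harctan₁ : Tendsto (fun y => Real.arctan (y / s)) l (𝓝 θ))
      (harctan₂ : Tendsto (fun y => Real.arctan ((y - x) / t)) l (𝓝 θ)) :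
      Tendsto (pKConvPrimitive t s x) l (𝓝 (t * s / (Real.pi ^ 2 *
        ((x ^ 2 + (t + s) ^ 2) * (x ^ 2 + (t - s) ^ 2))) *
          (x * 0 + (x ^ 2 + t ^ 2 - s ^ 2) / s * θ + (x ^ 2 - t ^ 2 + s ^ 2) / t * θ))) :=
    (((tendsto_log_sq_add_sq_sub_log hl hne x ht).const_mul x).add (harctan₁.const_mul _)
      |>.add (harctan₂.const_mul _)).const_mul _
  have hbot := hlim tendsto_inv_atBot_zero (eventually_ne_atBot 0)
    (by simpa using tendsto_arctan_sub_div_atBot hs 0) (tendsto_arctan_sub_div_atBot ht x)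
  have htop := hlim tendsto_inv_atTop_zero (eventually_ne_atTop 0)
    (by simpa using tendsto_arctan_sub_div_atTop hs 0) (tendsto_arctan_sub_div_atTop ht x)
  have hΔ : x ^ 2 + (t - s) ^ 2 ≠ 0 := by have := sq_pos_of_ne_zero hx; positivity
  rw [pconv, integral_of_hasDerivAt_of_tendsto (hasDerivAt_pKConvPrimitive ht hs hΔ)
    (integrable_pK_mul_pK ht hs x) hbot htop, pK]
  field_simp
  ring

lemma continuous_pconv_pK {t s : ℝ} (ht : 0 < t) (hs : 0 < s) :
    Continuous (pconv t (pK s)) :=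
  continuous_of_dominated
    (fun x =>
      ((continuous_pK ht).comp (by fun_prop) |>.mul (continuous_pK hs)).aestronglyMeasurable)
    (fun x => .of_forall fun y => by
      rw [Real.norm_of_nonneg (mul_nonneg (pK_pos ht _).le (pK_pos hs _).le)]
      exact mul_le_mul_of_nonneg_right (pK_le ht _) (pK_pos hs _).le)
    ((integrable_pK hs.le).const_mul _)
    (.of_forall fun y => ((continuous_pK ht).comp (by fun_prop)).mul continuous_const)

-- The primitive degenerates at `x = 0`, `t = s`; continuity in `x` covers that point.
lemma pconv_pK {t s : ℝ} (ht : 0 < t) (hs : 0 < s) : pconv t (pK s) = pK (t + s) :=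
  (continuous_pconv_pK ht hs).ext_on (dense_compl_singleton 0) (continuous_pK (by positivity))
    fun _ hx => pconv_pK_of_ne_zero ht hs hx

noncomputable def ptDpK (s t x : ℝ) : ℝ :=
  t * (x ^ 2 - (t + s) ^ 2) / (Real.pi * (x ^ 2 + (t + s) ^ 2) ^ 2)

lemma ptD_pK {s t : ℝ} (hs : 0 < s) (ht : 0 < t) (x : ℝ) : ptD t (pK s) x = ptDpK s t x := by
  have hsemigroup : (fun u => pconv u (pK s) x) =ᶠ[𝓝 t] fun u => pK (u + s) x := by
    filter_upwards [Ioi_mem_nhds ht] with u hu using congrFun (pconv_pK hu hs) x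
  have hden : Real.pi * (x ^ 2 + (t + s) ^ 2) ≠ 0 := by positivity
  have hsq : HasDerivAt (fun u => Real.pi * (x ^ 2 + (u + s) ^ 2)) (Real.pi * (2 * (t + s))) t := by
    simpa using ((((hasDerivAt_id t).add_const s).pow 2).const_add (x ^ 2)).const_mul Real.pi
  have hderiv : HasDerivAt (fun u => pK (u + s) x)
      ((1 * (Real.pi * (x ^ 2 + (t + s) ^ 2)) - (t + s) * (Real.pi * (2 * (t + s)))) /
        (Real.pi * (x ^ 2 + (t + s) ^ 2)) ^ 2) t :=
    ((hasDerivAt_id t).add_const s).div hsq hden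
  rw [ptD, hsemigroup.deriv_eq, hderiv.deriv, ptDpK]
  field_simp
  ring

lemma abs_ptDpK_le {s t : ℝ} (hs : 0 < s) (ht : 0 < t) (x : ℝ) :
    |ptDpK s t x| ≤ t / (x ^ 2 + s ^ 2 + t ^ 2) := by
  have hr : x ^ 2 + s ^ 2 + t ^ 2 ≤ x ^ 2 + (t + s) ^ 2 := by nlinarith
  have habs : |x ^ 2 - (t + s) ^ 2| ≤ x ^ 2 + (t + s) ^ 2 :=
    abs_le.mpr ⟨by nlinarith, by nlinarith⟩
  have hden : 0 < Real.pi * (x ^ 2 + (t + s) ^ 2) ^ 2 := by positivity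
  rw [ptDpK, abs_div, abs_mul, abs_of_pos ht, abs_of_pos hden,
    div_le_div_iff₀ hden (by positivity)]
  calc t * |x ^ 2 - (t + s) ^ 2| * (x ^ 2 + s ^ 2 + t ^ 2)
      ≤ t * (x ^ 2 + (t + s) ^ 2) * (x ^ 2 + (t + s) ^ 2) := by gcongr
    _ ≤ t * (Real.pi * (x ^ 2 + (t + s) ^ 2) ^ 2) := by
      rw [mul_assoc, ← sq]
      gcongr
      exact le_mul_of_one_le_left (by positivity) (by linarith [Real.pi_gt_three])

lemma inv_le_ptDpK {s t x : ℝ} (hx : 6 * s ≤ x) (ht : t ∈ Ioo (x / 3 - s) (x / 2 - s)) :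
    (50 * x)⁻¹ ≤ ptDpK s t x := by
  obtain ⟨ht₁, ht₂⟩ := ht
  have hx0 : 0 < x := by linarith
  have ht0 : x / 6 ≤ t := by linarith
  have hsum : x ^ 2 + (t + s) ^ 2 ≤ 5 / 4 * x ^ 2 := by nlinarith
  have hdiff : 3 / 4 * x ^ 2 ≤ x ^ 2 - (t + s) ^ 2 := by nlinarith
  rw [ptDpK, inv_eq_one_div, div_le_div_iff₀ (by positivity) (by positivity)]
  calc 1 * (Real.pi * (x ^ 2 + (t + s) ^ 2) ^ 2) ≤ 3.15 * (5 / 4 * x ^ 2) ^ 2 := by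
        rw [one_mul]; gcongr; exact Real.pi_lt_d2.le
    _ ≤ x / 6 * (3 / 4 * x ^ 2) * (50 * x) := by nlinarith
    _ ≤ t * (x ^ 2 - (t + s) ^ 2) * (50 * x) := by gcongr; linarith

lemma continuousOn_ptDpK {s : ℝ} (hs : 0 < s) (x : ℝ) : ContinuousOn (ptDpK s · x) (Ioi 0) :=
  (by fun_prop : Continuous fun t => t * (x ^ 2 - (t + s) ^ 2)).continuousOn.div (by fun_prop)
    fun t (ht : 0 < t) => by positivity

section SqAddSqKernel

variable {a q t : ℝ}

lemma rpow_div_sq_add_sq_rpow_le_of_le (hq : 0 < q) (ht : 0 < t) (hta : t ≤ a) :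
    t ^ (q - 1) / (a ^ 2 + t ^ 2) ^ q ≤ a ^ (-(2 * q)) * t ^ (q - 1) := by
  have ha : 0 < a := ht.trans_le hta
  rw [div_eq_inv_mul, Real.rpow_neg ha.le, Real.rpow_mul ha.le, Real.rpow_two]
  gcongr
  nlinarith

lemma rpow_div_sq_add_sq_rpow_le_of_ge (hq : 0 < q) (ha : 0 < a) (hat : a ≤ t) :
    t ^ (q - 1) / (a ^ 2 + t ^ 2) ^ q ≤ t ^ (-q - 1) := by
  have ht : 0 < t := ha.trans_le hat
  calc t ^ (q - 1) / (a ^ 2 + t ^ 2) ^ q ≤ t ^ (q - 1) / (t ^ 2) ^ q := by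
        gcongr; nlinarith
    _ = t ^ (-q - 1) := by
        rw [← Real.rpow_two, ← Real.rpow_mul ht.le, ← Real.rpow_sub ht]
        ring_nf

lemma continuousOn_rpow_div_sq_add_sq_rpow (ha : 0 < a) :
    ContinuousOn (fun t => t ^ (q - 1) / (a ^ 2 + t ^ 2) ^ q) (Ioi 0) :=
  fun t (ht : 0 < t) => ((Real.continuousAt_rpow_const _ _ (.inl ht.ne')).div
    ((Real.continuousAt_rpow_const _ _ (.inl (by positivity))).comp (by fun_prop))
    (Real.rpow_pos_of_pos (by positivity) _).ne').continuousWithinAt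

lemma integrableOn_rpow_div_sq_add_sq_rpow (ha : 0 < a) (hq : 0 < q) :
    IntegrableOn (fun t => t ^ (q - 1) / (a ^ 2 + t ^ 2) ^ q) (Ioi 0) := by
  have hmeas := continuousOn_rpow_div_sq_add_sq_rpow (q := q) ha
  rw [← Ioc_union_Ioi_eq_Ioi ha.le]
  refine .union ?_ ?_
  · refine Integrable.mono' ((intervalIntegral.intervalIntegrable_rpow' (r := q - 1)
      (by linarith)).1.const_mul (a ^ (-(2 * q))))
      ((hmeas.mono Ioc_subset_Ioi_self).aestronglyMeasurable measurableSet_Ioc) ?_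
    refine (ae_restrict_iff' measurableSet_Ioc).mpr (.of_forall fun t ht => ?_)
    rw [Real.norm_of_nonneg (by have := ht.1; positivity)]
    exact rpow_div_sq_add_sq_rpow_le_of_le hq ht.1 ht.2
  · refine Integrable.mono' (integrableOn_Ioi_rpow_of_lt (by linarith : -q - 1 < -1) ha)
      ((hmeas.mono (Ioi_subset_Ioi ha.le)).aestronglyMeasurable measurableSet_Ioi) ?_
    refine (ae_restrict_iff' measurableSet_Ioi).mpr (.of_forall fun t (ht : a < t) => ?_)
    rw [Real.norm_of_nonneg (by have := ha.trans ht; positivity)]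
    exact rpow_div_sq_add_sq_rpow_le_of_ge hq ha ht.le

lemma setIntegral_rpow_div_sq_add_sq_rpow_le (ha : 0 < a) (hq : 0 < q) :
    ∫ t in Ioi 0, t ^ (q - 1) / (a ^ 2 + t ^ 2) ^ q ≤ 2 * a ^ (-q) / q := by
  have hint := integrableOn_rpow_div_sq_add_sq_rpow ha hq
  rw [← Ioc_union_Ioi_eq_Ioi ha.le] at hint ⊢
  rw [setIntegral_union (Ioc_disjoint_Ioi le_rfl) measurableSet_Ioi hint.left_of_union
    hint.right_of_union]
  have hIoc : ∫ t in Ioc 0 a, t ^ (q - 1) / (a ^ 2 + t ^ 2) ^ q ≤ a ^ (-q) / q := by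
    refine (setIntegral_mono_on hint.left_of_union
      ((intervalIntegral.intervalIntegrable_rpow' (r := q - 1) (by linarith)).1.const_mul _)
      measurableSet_Ioc fun t ht => rpow_div_sq_add_sq_rpow_le_of_le hq ht.1 ht.2).trans_eq ?_
    rw [integral_const_mul, ← intervalIntegral.integral_of_le ha.le,
      integral_rpow (.inl (by linarith)), sub_add_cancel, Real.zero_rpow hq.ne', sub_zero,
      mul_div_assoc', ← Real.rpow_add ha]
    ring_nf
  have hIoi : ∫ t in Ioi a, t ^ (q - 1) / (a ^ 2 + t ^ 2) ^ q ≤ a ^ (-q) / q := by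
    refine (setIntegral_mono_on hint.right_of_union
      (integrableOn_Ioi_rpow_of_lt (by linarith) ha) measurableSet_Ioi
      fun t ht => rpow_div_sq_add_sq_rpow_le_of_ge hq ha (le_of_lt ht)).trans_eq ?_
    rw [integral_Ioi_rpow_of_lt (by linarith) ha, sub_add_cancel, neg_div, div_neg, neg_neg]
  exact (add_le_add hIoc hIoi).trans_eq (by ring)

end SqAddSqKernel

lemma pG_nonneg (q : ℝ) (h : ℝ → ℝ) (x : ℝ) : 0 ≤ pG q h x :=
  Real.rpow_nonneg (setIntegral_nonneg measurableSet_Ioi fun t (ht : 0 < t) => by positivity) _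

section GFunction

variable {s q : ℝ}

lemma pG_pK_eq (hs : 0 < s) (q x : ℝ) :
    pG q (pK s) x = (∫ t in Ioi 0, |ptDpK s t x| ^ q / t) ^ (1 / q) := by
  rw [pG]
  congr 1
  exact setIntegral_congr_fun measurableSet_Ioi fun t ht => by rw [ptD_pK hs ht]

lemma abs_ptDpK_rpow_div_le (hs : 0 < s) (hq : 0 < q) {t : ℝ} (ht : 0 < t) (x : ℝ) :
    |ptDpK s t x| ^ q / t ≤ t ^ (q - 1) / (((|x| + s) / 2) ^ 2 + t ^ 2) ^ q := by
  have hbound : |ptDpK s t x| ≤ t / (((|x| + s) / 2) ^ 2 + t ^ 2) := by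
    refine (abs_ptDpK_le hs ht x).trans (div_le_div_of_nonneg_left ht.le (by positivity) ?_)
    nlinarith [sq_abs x, sq_nonneg (|x| - s)]
  rw [Real.rpow_sub ht, Real.rpow_one, div_right_comm, ← Real.div_rpow ht.le (by positivity)]
  gcongr

lemma integrableOn_abs_ptDpK_rpow_div (hs : 0 < s) (hq : 0 < q) (x : ℝ) :
    IntegrableOn (fun t => |ptDpK s t x| ^ q / t) (Ioi 0) := by
  refine Integrable.mono'
    (integrableOn_rpow_div_sq_add_sq_rpow (a := (|x| + s) / 2) (by positivity) hq) ?_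
    ((ae_restrict_iff' measurableSet_Ioi).mpr (.of_forall fun t (ht : 0 < t) => ?_))
  · exact (((continuousOn_ptDpK hs x).abs.rpow_const fun _ _ => .inr hq.le).div continuousOn_id
      fun t (ht : 0 < t) => ht.ne').aestronglyMeasurable measurableSet_Ioi
  · rw [Real.norm_of_nonneg (by positivity)]
    exact abs_ptDpK_rpow_div_le hs hq ht x

lemma pG_pK_le (hs : 0 < s) (hq : 1 ≤ q) (x : ℝ) : pG q (pK s) x ≤ 4 / (|x| + s) := by
  have hq0 : 0 < q := by linarith
  have ha : 0 < (|x| + s) / 2 := by positivity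
  have hint : ∫ t in Ioi 0, |ptDpK s t x| ^ q / t ≤ 2 * ((|x| + s) / 2) ^ (-q) :=
    (setIntegral_mono_on (integrableOn_abs_ptDpK_rpow_div hs hq0 x)
      (integrableOn_rpow_div_sq_add_sq_rpow ha hq0) measurableSet_Ioi
      fun t ht => abs_ptDpK_rpow_div_le hs hq0 ht x).trans
    ((setIntegral_rpow_div_sq_add_sq_rpow_le ha hq0).trans
      (div_le_self (by positivity) hq))
  rw [pG_pK_eq hs]
  calc (∫ t in Ioi 0, |ptDpK s t x| ^ q / t) ^ (1 / q)
      ≤ (2 * ((|x| + s) / 2) ^ (-q)) ^ (1 / q) :=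
        Real.rpow_le_rpow (setIntegral_nonneg measurableSet_Ioi fun t (ht : 0 < t) => by positivity)
          hint (by positivity)
    _ = 2 ^ (1 / q) * ((|x| + s) / 2)⁻¹ := by
        rw [Real.mul_rpow (by norm_num) (by positivity), ← Real.rpow_mul ha.le,
          neg_mul, mul_one_div_cancel hq0.ne', Real.rpow_neg_one]
    _ ≤ 2 * ((|x| + s) / 2)⁻¹ := by
        gcongr
        exact Real.rpow_le_self_of_one_le (by norm_num) (by rw [div_le_one hq0]; exact hq)
    _ = 4 / (|x| + s) := by field_simp; norm_num

lemma measurable_pG_pK (hs : 0 < s) (q : ℝ) : Measurable (pG q (pK s)) := by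
  have hintegrand : StronglyMeasurable (Function.uncurry fun x t => |ptDpK s t x| ^ q / t) :=
    (((by unfold ptDpK; fun_prop : Measurable fun z : ℝ × ℝ => ptDpK s z.2 z.1).abs.pow_const q).div
      measurable_snd).stronglyMeasurable
  rw [funext (pG_pK_eq hs q)]
  exact (hintegrand.integral_prod_right (ν := volume.restrict (Ioi 0))).measurable.pow_const _

lemma integrable_abs_pG_pK_rpow (hs : 0 < s) (hq : 1 ≤ q) {p : ℝ} (hp : 1 < p) :
    Integrable fun x => |pG q (pK s) x| ^ p := by
  have hdecay := (integrable_one_add_norm (E := ℝ) (r := p) (by simpa using hp)).comp_div hs.ne'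
  refine Integrable.mono' (hdecay.const_mul ((4 / s) ^ p)) ?_ (.of_forall fun x => ?_)
  · exact ((measurable_pG_pK hs q).abs.pow_const p).aestronglyMeasurable
  have hG := pG_nonneg q (pK s) x
  have hrewrite : 4 / (|x| + s) = 4 / s * (1 + ‖x / s‖)⁻¹ := by
    rw [Real.norm_eq_abs, abs_div, abs_of_pos hs]
    field_simp
    ring
  rw [Real.norm_of_nonneg (by positivity), abs_of_nonneg hG, Real.rpow_neg (by positivity),
    ← Real.inv_rpow (by positivity), ← Real.mul_rpow (by positivity) (by positivity), ← hrewrite]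
  exact Real.rpow_le_rpow hG (pG_pK_le hs hq x) (by linarith)

lemma integrableOn_abs_ptD_pK_rpow_div (hs : 0 < s) (hq : 0 < q) (x : ℝ) :
    IntegrableOn (fun t => |ptD t (pK s) x| ^ q / t) (Ioi 0) :=
  (integrableOn_abs_ptDpK_rpow_div hs hq x).congr_fun (fun t ht => by rw [ptD_pK hs ht])
    measurableSet_Ioi

lemma setIntegral_abs_ptD_pK_rpow_div_le_pG {S : Set ℝ} (hSm : MeasurableSet S)
    (hS : S ⊆ Ioi 0) (hs : 0 < s) (hq : 0 < q) (x : ℝ) :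
    (∫ t in S, |ptD t (pK s) x| ^ q / t) ^ (1 / q) ≤ pG q (pK s) x := by
  have hnonneg : ∀ t ∈ Ioi (0 : ℝ), 0 ≤ |ptD t (pK s) x| ^ q / t :=
    fun t (ht : 0 < t) => by positivity
  refine Real.rpow_le_rpow (setIntegral_nonneg hSm fun t ht => hnonneg t (hS ht)) ?_
    (by positivity)
  exact setIntegral_mono_set (integrableOn_abs_ptD_pK_rpow_div hs hq x)
    ((ae_restrict_iff' measurableSet_Ioi).mpr (.of_forall hnonneg)) hS.eventuallyLE

lemma div_le_window_integral_rpow {x : ℝ} (hs : 0 < s) (hq : 1 ≤ q) (hx : 6 * s ≤ x) :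
    (150 : ℝ)⁻¹ / x ≤ (∫ t in Ioo (x / 3 - s) (x / 2 - s), |ptD t (pK s) x| ^ q / t) ^ (1 / q) := by
  have hq0 : 0 < q := by linarith
  have hx0 : 0 < x := by linarith
  have hwindow : Ioo (x / 3 - s) (x / 2 - s) ⊆ Ioi 0 := fun t ht =>
    show 0 < t by linarith [ht.1]
  have hpointwise : ∀ t ∈ Ioo (x / 3 - s) (x / 2 - s),
      (50 * x)⁻¹ ^ q * (2 / x) ≤ |ptD t (pK s) x| ^ q / t := fun t ht => by
    have ht0 : 0 < t := hwindow ht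
    rw [ptD_pK hs ht0, div_eq_mul_one_div _ t]
    refine mul_le_mul ?_ ?_ (by positivity) (by positivity)
    · gcongr; exact (inv_le_ptDpK hx ht).trans (le_abs_self _)
    · rw [div_le_div_iff₀ hx0 ht0]; linarith [ht.2]
  have hvolume : volume.real (Ioo (x / 3 - s) (x / 2 - s)) = x / 6 := by
    rw [Real.volume_real_Ioo_of_le (by linarith)]; ring
  have hintegral := setIntegral_ge_of_const_le measurableSet_Ioo (by simp) hpointwise
    ((integrableOn_abs_ptD_pK_rpow_div hs hq0 x).mono_set hwindow)
  rw [hvolume, smul_eq_mul, mul_comm] at hintegral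
  have hthree : (3 : ℝ)⁻¹ ^ q ≤ 3⁻¹ := Real.rpow_le_self_of_le_one (by norm_num) (by norm_num) hq
  calc (150 : ℝ)⁻¹ / x = (((150 * x)⁻¹) ^ q) ^ (1 / q) := by
        rw [← Real.rpow_mul (by positivity), mul_one_div_cancel hq0.ne', Real.rpow_one]; ring
    _ ≤ _ := by
        gcongr
        calc (150 * x)⁻¹ ^ q = (50 * x)⁻¹ ^ q * 3⁻¹ ^ q := by
              rw [← Real.mul_rpow (by positivity) (by norm_num)]; ring_nf
          _ ≤ (50 * x)⁻¹ ^ q * 3⁻¹ := by gcongr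
          _ = (50 * x)⁻¹ ^ q * (2 / x) * (x / 6) := by field_simp; ring
          _ ≤ _ := hintegral

lemma pG_pK_ge {x : ℝ} (hs : 0 < s) (hq : 1 ≤ q) (hx : 6 * s ≤ x) :
    (150 : ℝ)⁻¹ / x ≤ pG q (pK s) x :=
  (div_le_window_integral_rpow hs hq hx).trans <|
    setIntegral_abs_ptD_pK_rpow_div_le_pG measurableSet_Ioo
      (fun t ht => show 0 < t by linarith [ht.1]) hs (by linarith) x

end GFunction

lemma exp_neg_one_le_rpow_self {u : ℝ} (hu : 0 < u) : Real.exp (-1) ≤ u ^ u := by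
  rw [Real.rpow_def_of_pos hu, Real.exp_le_exp]
  have hlog := mul_le_mul_of_nonneg_right (Real.one_sub_inv_le_log_of_pos hu) hu.le
  rw [sub_mul, inv_mul_cancel₀ hu.ne'] at hlog
  linarith

lemma inv_sub_one_le_three_mul_rpow {p : ℝ} (hp : 1 < p) :
    (p - 1)⁻¹ ≤ 3 * (p - 1) ^ (-(1 / p)) := by
  have hu : 0 < p - 1 := by linarith
  have hp0 : 0 < p := by linarith
  have hsplit : (p - 1) ^ (-(1 / p)) = (p - 1)⁻¹ * ((p - 1) ^ (p - 1)) ^ (1 / p) := by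
    rw [← Real.rpow_mul hu.le, ← Real.rpow_neg_one, ← Real.rpow_add hu]
    congr 1
    field_simp
    ring
  have hexp : (3 : ℝ)⁻¹ ≤ Real.exp (-1) := by
    rw [Real.exp_neg]; gcongr; linarith [Real.exp_one_lt_d9]
  have hroot : Real.exp (-1) ≤ ((p - 1) ^ (p - 1)) ^ (1 / p) :=
    calc Real.exp (-1) ≤ Real.exp (-1) ^ (1 / p) := by
          rw [← Real.exp_mul]; gcongr; rw [neg_one_mul, neg_le_neg_iff, div_le_one hp0]; exact hp.le
      _ ≤ ((p - 1) ^ (p - 1)) ^ (1 / p) := by gcongr; exact exp_neg_one_le_rpow_self hu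
  rw [hsplit]
  calc (p - 1)⁻¹ = 3 * ((p - 1)⁻¹ * 3⁻¹) := by ring
    _ ≤ _ := by gcongr; linarith

lemma neg_one_div_pconj (p : ℝ) : -(1 / pconj p) = (1 - p) / p := by
  rw [pconj, one_div_div]; ring

lemma lpN_pG_pK_ge {s p q : ℝ} (hs : 0 < s) (hp : 1 < p) (hq : 1 ≤ q) :
    (2700 : ℝ)⁻¹ * (p - 1)⁻¹ * s ^ (-(1 / pconj p)) ≤ lpN p (pG q (pK s)) := by
  have hp0 : 0 < p := by linarith
  have hp1 : 0 < p - 1 := by linarith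
  have h6s : 0 < 6 * s := by positivity
  have hGp := integrable_abs_pG_pK_rpow hs hq hp
  have htail : (150 : ℝ)⁻¹ ^ p * ((6 * s) ^ (1 - p) / (p - 1)) ≤ ∫ x, |pG q (pK s) x| ^ p := by
    have hpow : IntegrableOn (fun x : ℝ => x ^ (-p)) (Ioi (6 * s)) :=
      integrableOn_Ioi_rpow_of_lt (by linarith) h6s
    calc (150 : ℝ)⁻¹ ^ p * ((6 * s) ^ (1 - p) / (p - 1))
        = ∫ x in Ioi (6 * s), (150 : ℝ)⁻¹ ^ p * x ^ (-p) := by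
          rw [integral_const_mul, integral_Ioi_rpow_of_lt (by linarith) h6s, neg_add_eq_sub,
            neg_div, ← div_neg, neg_sub]
      _ ≤ ∫ x in Ioi (6 * s), |pG q (pK s) x| ^ p :=
          setIntegral_mono_on (hpow.const_mul _) hGp.integrableOn measurableSet_Ioi
            fun x (hx : 6 * s < x) => by
              have hx0 : 0 < x := h6s.trans hx
              rw [Real.rpow_neg hx0.le, ← div_eq_mul_inv, ← Real.div_rpow (by norm_num) hx0.le]
              exact Real.rpow_le_rpow (by positivity)
                ((pG_pK_ge hs hq hx.le).trans (le_abs_self _)) hp0.le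
      _ ≤ ∫ x, |pG q (pK s) x| ^ p :=
          setIntegral_le_integral hGp (.of_forall fun x => by positivity)
  have hroot : ((150 : ℝ)⁻¹ ^ p * ((6 * s) ^ (1 - p) / (p - 1))) ^ (1 / p)
      = 150⁻¹ * ((6 : ℝ) ^ ((1 - p) / p) * s ^ ((1 - p) / p)) * (p - 1) ^ (-(1 / p)) := by
    rw [Real.mul_rpow (by positivity) (by positivity), Real.div_rpow (by positivity) hp1.le,
      ← Real.rpow_mul (by norm_num), ← Real.rpow_mul h6s.le, mul_one_div_cancel hp0.ne',
      Real.rpow_one, Real.mul_rpow (by norm_num) hs.le, Real.rpow_neg hp1.le, mul_one_div,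
      div_eq_mul_inv]
    ring
  have hsix : (6 : ℝ)⁻¹ ≤ 6 ^ ((1 - p) / p) := by
    rw [← Real.rpow_neg_one]
    exact Real.rpow_le_rpow_of_exponent_le (by norm_num) (by rw [le_div_iff₀ hp0]; linarith)
  rw [neg_one_div_pconj]
  calc (2700 : ℝ)⁻¹ * (p - 1)⁻¹ * s ^ ((1 - p) / p)
      = 150⁻¹ * (6⁻¹ * s ^ ((1 - p) / p)) * (3⁻¹ * (p - 1)⁻¹) := by ring
    _ ≤ 150⁻¹ * ((6 : ℝ) ^ ((1 - p) / p) * s ^ ((1 - p) / p)) * (p - 1) ^ (-(1 / p)) := by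
        gcongr
        linarith [inv_sub_one_le_three_mul_rpow hp]
    _ ≤ lpN p (pG q (pK s)) := by
        rw [← hroot, lpN]
        exact Real.rpow_le_rpow (by positivity) htail (by positivity)

section PoissonKernelLp

variable {s p : ℝ}

lemma abs_pK_rpow_le (hs : 0 < s) (hp : 1 ≤ p) (x : ℝ) :
    |pK s x| ^ p ≤ (Real.pi * s)⁻¹ ^ (p - 1) * pK s x := by
  have hK := pK_pos hs x
  rw [abs_of_pos hK, ← sub_add_cancel p 1, Real.rpow_add_one hK.ne', sub_add_cancel]
  gcongr
  exact pK_le hs x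

lemma integrable_abs_pK_rpow (hs : 0 < s) (hp : 1 ≤ p) : Integrable fun x => |pK s x| ^ p :=
  ((integrable_pK hs.le).const_mul _).mono'
    ((continuous_pK hs).abs.rpow_const fun _ => .inr (by linarith)).aestronglyMeasurable
    (.of_forall fun x => by
      rw [Real.norm_of_nonneg (by positivity)]; exact abs_pK_rpow_le hs hp x)

lemma memLp_pK (hs : 0 < s) (hp : 1 ≤ p) : MemLp (pK s) (ENNReal.ofReal p) volume := by
  refine (integrable_norm_rpow_iff (continuous_pK hs).aestronglyMeasurable
    (by simp; linarith) ENNReal.ofReal_ne_top).mp ?_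
  simpa [ENNReal.toReal_ofReal (by linarith : 0 ≤ p)] using integrable_abs_pK_rpow hs hp

lemma lpN_pK_le (hs : 0 < s) (hp : 1 ≤ p) : lpN p (pK s) ≤ s ^ (-(1 / pconj p)) := by
  have hp0 : 0 < p := by linarith
  have hintegral : ∫ x, |pK s x| ^ p ≤ (Real.pi * s)⁻¹ ^ (p - 1) := by
    calc ∫ x, |pK s x| ^ p ≤ ∫ x, (Real.pi * s)⁻¹ ^ (p - 1) * pK s x :=
          integral_mono (integrable_abs_pK_rpow hs hp) ((integrable_pK hs.le).const_mul _)
            (abs_pK_rpow_le hs hp)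
      _ = (Real.pi * s)⁻¹ ^ (p - 1) := by rw [integral_const_mul, integral_pK hs, mul_one]
  rw [neg_one_div_pconj, lpN]
  calc (∫ x, |pK s x| ^ p) ^ (1 / p) ≤ ((Real.pi * s)⁻¹ ^ (p - 1)) ^ (1 / p) :=
        Real.rpow_le_rpow (integral_nonneg fun x => by positivity) hintegral (by positivity)
    _ = Real.pi ^ ((1 - p) / p) * s ^ ((1 - p) / p) := by
        rw [← Real.rpow_mul (by positivity), Real.inv_rpow (by positivity),
          ← Real.rpow_neg (by positivity), Real.mul_rpow Real.pi_pos.le hs.le]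
        ring_nf
    _ ≤ s ^ ((1 - p) / p) := by
        refine mul_le_of_le_one_left (by positivity) (Real.rpow_le_one_of_one_le_of_nonpos
          (by linarith [Real.pi_gt_three]) (div_nonpos_of_nonpos_of_nonneg (by linarith) hp0.le))

end PoissonKernelLp

lemma inv_sub_one_le_of_lpN_pG_le {p q L : ℝ} (hp : 1 < p) (hq : 1 ≤ q) (hL : 0 ≤ L)
    (hbound : ∀ h : ℝ → ℝ, MemLp h (ENNReal.ofReal p) volume → lpN p (pG q h) ≤ L * lpN p h) :
    (2700 : ℝ)⁻¹ * (p - 1)⁻¹ ≤ L := by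
  simpa using (lpN_pG_pK_ge one_pos hp hq).trans <| (hbound _ (memLp_pK one_pos hp.le)).trans
    (mul_le_mul_of_nonneg_left (lpN_pK_le one_pos hp.le) hL)

/-- lower bounds for the `g`-function of `f = 𝐏_s`, and the consequence that the
best constant in `‖G_q^𝐏 f‖_p ≤ L ‖f‖_p` satisfies `L ≳ p'` as `p → 1`. -/
theorem stmt18 :
    ∃ c C : ℝ, 0 < c ∧ 0 < C ∧
      ∀ s : ℝ, 0 < s → ∀ p q : ℝ, 1 < p → p ≤ q →
        (∀ x : ℝ, 6 * s ≤ x →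
          c / x ≤ (∫ t in Ioo (x / 3 - s) (x / 2 - s), |ptD t (pK s) x| ^ q / t) ^ (1 / q)) ∧
        (c * (p - 1)⁻¹ * s ^ (-(1 / pconj p)) ≤ lpN p (pG q (pK s))) ∧
        (lpN p (pK s) ≤ C * s ^ (-(1 / pconj p))) ∧
        (∀ L : ℝ, 0 ≤ L →
          (∀ h : ℝ → ℝ, MemLp h (ENNReal.ofReal p) volume →
            lpN p (pG q h) ≤ L * lpN p h) →
          p ≤ 2 → c * pconj p ≤ L) := by
  refine ⟨5400⁻¹, 1, by norm_num, one_pos, fun s hs p q hp hpq => ?_⟩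
  have hq : 1 ≤ q := by linarith
  refine ⟨fun x hx => ?_, ?_, by simpa using lpN_pK_le hs hp.le, fun L hL hbound hp2 => ?_⟩
  · refine le_trans ?_ (div_le_window_integral_rpow hs hq hx)
    gcongr
    · linarith
    · norm_num
  · refine le_trans ?_ (lpN_pG_pK_ge hs hp hq)
    gcongr
    norm_num
  · have hpconj : pconj p ≤ 2 * (p - 1)⁻¹ := by
      rw [pconj, div_eq_mul_inv]; gcongr
    linarith [inv_sub_one_le_of_lpN_pG_le hp hq hL hbound]
end
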